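/- arXiv:1210.6724 — 5 statements merged into one kernel-verified Lean document; each statement's English description precedes it below -/
import Mathlib

section
/- Let D(Ā) = (X, E) be the state digraph of a structural pattern Ā and let M* be a maximum matching of the bipartite graph B(X, X, E) whose set of right-unmatched vertices is nonempty. Then the edges of M* (viewed as edges of D(Ā)), together with the vertices of X isolated by M*, constitute a spanning subgraph of D(Ā) that is a vertex-disjoint union of directed cycles and state stems, where the roots of the state stems are exactly the right-unmatched vertices of M*. -/
/-- A real matrix `A` realizes the Boolean structural pattern `P` if `A` vanishes
wherever `P` is zero (`false`). -/
def Realizes {m k : ℕ} (A : Matrix (Fin m) (Fin k) ℝ) (P : Matrix (Fin m) (Fin k) Bool) : Prop :=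
  ∀ i j, P i j = false → A i j = 0

/-- The controllability matrix `[B, AB, …, A^{n-1}B]`. -/
def ctrbMatrix {n p : ℕ} (A : Matrix (Fin n) (Fin n) ℝ) (B : Matrix (Fin n) (Fin p) ℝ) :
    Matrix (Fin n) (Fin n × Fin p) ℝ :=
  Matrix.of fun i jk => (A ^ (jk.1 : ℕ) * B) i jk.2

/-- Structural controllability of a pair of patterns `(Ā, B̄)`: some realization
has full-rank controllability matrix. -/
def StructurallyControllable {n p : ℕ} (Ab : Matrix (Fin n) (Fin n) Bool)
    (Bb : Matrix (Fin n) (Fin p) Bool) : Prop :=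
  ∃ (A : Matrix (Fin n) (Fin n) ℝ) (B : Matrix (Fin n) (Fin p) ℝ),
    Realizes A Ab ∧ Realizes B Bb ∧ (ctrbMatrix A B).rank = n

/-- A dedicated input pattern: every column has exactly one nonzero entry. -/
def Dedicated {n p : ℕ} (Bb : Matrix (Fin n) (Fin p) Bool) : Prop :=
  ∀ j, ∃! i, Bb i j = true

/-- Edge `x_j → x_i` of the state digraph `D(Ā)` (present iff `Ā_{ij} ≠ 0`). -/
def stateEdge {n : ℕ} (Ab : Matrix (Fin n) (Fin n) Bool) (j i : Fin n) : Prop :=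
  Ab i j = true

/-- Edge set of the bipartite graph `B(X, X, E)` associated with `D(Ā)`:
`(j, i)` is an edge from left `x_j` to right `x_i` iff `x_j → x_i` in `D(Ā)`. -/
def stateEdgeFinset {n : ℕ} (Ab : Matrix (Fin n) (Fin n) Bool) : Finset (Fin n × Fin n) :=
  Finset.univ.filter fun e => Ab e.2 e.1 = true

/-- A matching of a bipartite graph with edge set `E`: a subset of `E` in which
no two edges share a left endpoint or share a right endpoint. -/
def IsMatching {α β : Type*} (E M : Finset (α × β)) : Prop :=
  M ⊆ E ∧ (∀ e ∈ M, ∀ f ∈ M, e.1 = f.1 → e = f) ∧ ∀ e ∈ M, ∀ f ∈ M, e.2 = f.2 → e = f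

/-- A maximum matching: a matching of maximum cardinality. -/
def IsMaxMatching {α β : Type*} (E M : Finset (α × β)) : Prop :=
  IsMatching E M ∧ ∀ M', IsMatching E M' → M'.card ≤ M.card

/-- `v` is a right-unmatched vertex with respect to the matching `M`. -/
def RightUnmatched {α β : Type*} (M : Finset (α × β)) (v : β) : Prop :=
  ∀ e ∈ M, e.2 ≠ v

/-- The set of right-unmatched vertices of `M`. -/
def unmatchedSet {α β : Type*} (M : Finset (α × β)) : Set β :=
  {v | RightUnmatched M v}

/-- The tip (last vertex) of the path `r :: l`. -/
def stemTip {V : Type*} (r : V) (l : List V) : V :=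
  (r :: l).getLast (List.cons_ne_nil r l)

/-- `r :: l` is a state stem: a simple directed path (possibly a single vertex)
with root `r` and tip `stemTip r l`. -/
def IsStem {V : Type*} (edge : V → V → Prop) (r : V) (l : List V) : Prop :=
  (r :: l).Nodup ∧ List.Chain edge r l

/-- `r :: l` is a simple directed cycle (a self-loop when `l = []`). -/
def IsCycle {V : Type*} (edge : V → V → Prop) (r : V) (l : List V) : Prop :=
  IsStem edge r l ∧ edge (stemTip r l) r

/-- The (directed) edges of the stem `r :: l`. -/
def stemEdges {V : Type*} (r : V) (l : List V) : List (V × V) :=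
  (r :: l).zip l

/-- The (directed) edges of the cycle `r :: l`, including the closing edge. -/
def cycleEdges {V : Type*} (r : V) (l : List V) : List (V × V) :=
  (r :: l).zip (l ++ [r])

/-- The vertices of a stem/cycle encoded as a pair (root, remaining vertices). -/
def pieceVerts {V : Type*} (s : V × List V) : List V :=
  s.1 :: s.2

/-- Reachability (by a directed path) in a digraph. -/
def Reach {V : Type*} (edge : V → V → Prop) : V → V → Prop :=
  Relation.ReflTransGen edge

/-- `S` is a strongly connected component: a nonempty set of mutually reachable
vertices that is maximal with this property. -/
def IsSCC {V : Type*} (edge : V → V → Prop) (S : Set V) : Prop :=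
  S.Nonempty ∧ (∀ v ∈ S, ∀ w ∈ S, Reach edge v w) ∧
    ∀ v ∈ S, ∀ w, Reach edge v w → Reach edge w v → w ∈ S

/-- A non-top-linked SCC: an SCC with no edge entering it from outside. -/
def IsNonTopLinkedSCC {V : Type*} (edge : V → V → Prop) (S : Set V) : Prop :=
  IsSCC edge S ∧ ∀ a b, edge a b → b ∈ S → a ∈ S

/-- `β`: the number of non-top-linked SCCs of `D(Ā)`. -/
noncomputable def numNonTopSCC {n : ℕ} (Ab : Matrix (Fin n) (Fin n) Bool) : ℕ :=
  Set.ncard {S : Set (Fin n) | IsNonTopLinkedSCC (stateEdge Ab) S}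

/-- The number of non-top-linked SCCs of `D(Ā)` that are top assignable w.r.t. `M`,
i.e. contain a right-unmatched vertex of `M`. -/
noncomputable def assignIdx {n : ℕ} (Ab : Matrix (Fin n) (Fin n) Bool) (M : Finset (Fin n × Fin n)) : ℕ :=
  Set.ncard {S : Set (Fin n) | IsNonTopLinkedSCC (stateEdge Ab) S ∧ ∃ v ∈ S, RightUnmatched M v}

/-- `α`: the maximum assignability index, the maximum over all maximum matchings of
the number of top assignable non-top-linked SCCs. -/
noncomputable def maxAssignIdx {n : ℕ} (Ab : Matrix (Fin n) (Fin n) Bool) : ℕ :=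
  sSup {k | ∃ M, IsMaxMatching (stateEdgeFinset Ab) M ∧ assignIdx Ab M = k}

/-- The minimum number of dedicated inputs rendering the pattern structurally controllable. -/
noncomputable def minDedicatedInputs {n : ℕ} (Ab : Matrix (Fin n) (Fin n) Bool) : ℕ :=
  sInf {p : ℕ | ∃ Bb : Matrix (Fin n) (Fin p) Bool, Dedicated Bb ∧ StructurallyControllable Ab Bb}

/-!
A matching `M` of `B(X, X, E)` is the same as a relation `r j i := (j, i) ∈ M` on `X` that is
both left- and right-unique, i.e. a partial injection. Following `r` from a vertex without
`r`-predecessor (a right-unmatched vertex) gives a simple path that stops at a vertex without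
successor, and by finiteness every vertex that is not reached from such a source lies on an
`r`-cycle. Uniqueness of predecessors and successors makes two of these stems and cycles that
share a vertex coincide, and each edge of `M` leaves a vertex of exactly one of them.
-/

theorem stemTip_cons {V : Type*} (v w : V) (l : List V) : stemTip v (w :: l) = stemTip w l := by
  simp [stemTip, List.getLast_cons]

theorem stemEdges_cons {V : Type*} (v w : V) (l : List V) :
    stemEdges v (w :: l) = (v, w) :: stemEdges w l := rfl

theorem cycleEdges_eq_stemEdges_append {V : Type*} (v : V) (l : List V) :
    cycleEdges v l = stemEdges v l ++ [(stemTip v l, v)] := by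
  suffices ∀ a : V, (a :: l).zip (l ++ [v]) = (a :: l).zip l ++ [(stemTip a l, v)] from this v
  induction l with
  | nil => intro a; rfl
  | cons w l ih => intro a; simp [ih w, stemTip_cons]

theorem IsStem.mono {V : Type*} {e e' : V → V → Prop} (h : ∀ a b, e a b → e' a b) {v : V}
    {l : List V} (hs : IsStem e v l) : IsStem e' v l :=
  ⟨hs.1, List.IsChain.imp h hs.2⟩

theorem IsCycle.mono {V : Type*} {e e' : V → V → Prop} (h : ∀ a b, e a b → e' a b) {v : V}
    {l : List V} (hc : IsCycle e v l) : IsCycle e' v l :=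
  ⟨hc.1.mono h, h _ _ hc.2⟩

namespace List.IsChain

variable {V : Type*} {r : V → V → Prop} {v : V} {l : List V}

theorem exists_rel_of_mem (h : (v :: l).IsChain r) {x : V} (hx : x ∈ l) :
    ∃ u ∈ v :: l, r u x := by
  induction l generalizing v with
  | nil => simp at hx
  | cons w l ih =>
    rw [List.isChain_cons_cons] at h
    rcases List.mem_cons.mp hx with rfl | hx
    · exact ⟨v, List.mem_cons_self, h.1⟩
    · obtain ⟨u, hu, hux⟩ := ih h.2 hx
      exact ⟨u, List.mem_cons_of_mem _ hu, hux⟩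

theorem rel_of_mem_stemEdges (h : (v :: l).IsChain r) {p : V × V} (hp : p ∈ stemEdges v l) :
    r p.1 p.2 := by
  induction l generalizing v with
  | nil => simp [stemEdges] at hp
  | cons w l ih =>
    rw [List.isChain_cons_cons] at h
    rw [stemEdges_cons, List.mem_cons] at hp
    rcases hp with rfl | hp
    exacts [h.1, ih h.2 hp]

theorem mem_stemEdges_or_eq_stemTip (hr : Relator.RightUnique r) (h : (v :: l).IsChain r)
    {j i : V} (hj : j ∈ v :: l) (hji : r j i) : (j, i) ∈ stemEdges v l ∨ j = stemTip v l := by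
  induction l generalizing v with
  | nil => exact Or.inr (List.mem_singleton.mp hj)
  | cons w l ih =>
    rw [List.isChain_cons_cons] at h
    rw [stemEdges_cons, stemTip_cons, List.mem_cons]
    rcases List.mem_cons.mp hj with rfl | hj
    · exact Or.inl (Or.inl (by rw [hr hji h.1]))
    · exact (ih h.2 hj).imp_left Or.inr

theorem mem_cons_iff_reflTransGen (hr : Relator.RightUnique r) (h : (v :: l).IsChain r)
    (htip : ∀ i, r (stemTip v l) i → i ∈ v :: l) {w : V} :
    w ∈ v :: l ↔ Relation.ReflTransGen r v w := by
  constructor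
  · exact h.induction (Relation.ReflTransGen r v) _ (fun _ _ hxy hx => hx.tail hxy)
      (fun _ => .refl) w
  · intro hw
    induction hw with
    | refl => exact List.mem_cons_self
    | tail _ hyz hy =>
      rcases mem_stemEdges_or_eq_stemTip hr h hy hyz with he | rfl
      · exact List.mem_cons_of_mem _ (List.of_mem_zip he).2
      · exact htip _ hyz

end List.IsChain

theorem IsCycle.rel_of_mem_cycleEdges {V : Type*} {r : V → V → Prop} {v : V} {l : List V}
    (hc : IsCycle r v l) {p : V × V} (hp : p ∈ cycleEdges v l) : r p.1 p.2 := by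
  rw [cycleEdges_eq_stemEdges_append, List.mem_append, List.mem_singleton] at hp
  rcases hp with hp | rfl
  exacts [hc.1.2.rel_of_mem_stemEdges hp, hc.2]

namespace Relation

variable {V : Type*} (r : V → V → Prop)

def IsSource (v : V) : Prop := ∀ u, ¬ r u v

def OnCycle (v : V) : Prop := TransGen r v v

/-- For right-unique `r` the chosen successor is the only one. -/
noncomputable def succList : ℕ → V → List V
  | 0, _ => []
  | k + 1, v => open Classical in
    if h : ∃ w, r v w then h.choose :: succList k h.choose else []

variable {r}

theorem succList_succ_of_not_exists {k : ℕ} {v : V} (h : ¬ ∃ w, r v w) :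
    succList r (k + 1) v = [] := by
  rw [succList, dif_neg h]

theorem succList_succ_of_rel (hr : Relator.RightUnique r) {k : ℕ} {v w : V} (hvw : r v w) :
    succList r (k + 1) v = w :: succList r k w := by
  have h : ∃ w, r v w := ⟨w, hvw⟩
  rw [succList, dif_pos h, hr h.choose_spec hvw]

theorem isChain_cons_succList (k : ℕ) (v : V) : (v :: succList r k v).IsChain r := by
  induction k generalizing v with
  | zero => exact .singleton v
  | succ k ih =>
    rw [succList]
    split_ifs with h
    · exact (ih _).cons_cons h.choose_spec
    · exact .singleton v

theorem length_succList_le (k : ℕ) (v : V) : (succList r k v).length ≤ k := by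
  induction k generalizing v with
  | zero => simp [succList]
  | succ k ih =>
    rw [succList]
    split_ifs
    · simpa using ih _
    · simp

theorem not_rel_stemTip_of_length_succList_lt {k : ℕ} {v : V} (hk : (succList r k v).length < k)
    (w : V) : ¬ r (stemTip v (succList r k v)) w := by
  induction k generalizing v with
  | zero => omega
  | succ k ih =>
    rw [succList] at hk ⊢
    split_ifs at hk ⊢ with h
    · rw [stemTip_cons]
      exact ih (by simpa using hk)
    · exact fun hw => h ⟨w, hw⟩

theorem mem_succList_succ {k : ℕ} {v x : V} (hx : x ∈ succList r (k + 1) v) :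
    x ∈ succList r k v ∨ r (stemTip v (succList r k v)) x := by
  induction k generalizing v with
  | zero =>
    rw [succList] at hx
    split_ifs at hx with h
    · rw [List.mem_singleton.mp hx]
      exact Or.inr h.choose_spec
    · simp at hx
  | succ k ih =>
    rw [succList] at hx ⊢
    split_ifs at hx ⊢ with h
    · rw [stemTip_cons]
      rcases List.mem_cons.mp hx with rfl | hx
      · exact Or.inl List.mem_cons_self
      · exact (ih hx).imp_left (List.mem_cons_of_mem _)
    · simp at hx

theorem mem_succList_succ_of_rel (hr : Relator.RightUnique r) {k : ℕ} {v x y : V}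
    (hx : x ∈ v :: succList r k v) (hxy : r x y) : y ∈ succList r (k + 1) v := by
  induction k generalizing v with
  | zero =>
    obtain rfl : x = v := by simpa [succList] using hx
    rw [succList_succ_of_rel hr hxy]
    exact List.mem_cons_self
  | succ k ih =>
    rcases List.mem_cons.mp hx with rfl | hx
    · rw [succList_succ_of_rel hr hxy]
      exact List.mem_cons_self
    · obtain ⟨w, hvw⟩ : ∃ w, r v w := by
        by_contra h
        simp [succList_succ_of_not_exists h] at hx
      rw [succList_succ_of_rel hr hvw] at hx ⊢
      exact List.mem_cons_of_mem _ (ih hx)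

theorem exists_mem_succList_of_transGen (hr : Relator.RightUnique r) {v w : V}
    (h : TransGen r v w) : ∃ k, w ∈ succList r k v := by
  have reach : ∀ {x}, ReflTransGen r v x → ∃ k, x ∈ v :: succList r k v := by
    intro x hx
    induction hx with
    | refl => exact ⟨0, List.mem_cons_self⟩
    | tail _ hyz ih =>
      obtain ⟨k, hk⟩ := ih
      exact ⟨k + 1, List.mem_cons_of_mem _ (mem_succList_succ_of_rel hr hk hyz)⟩
  obtain ⟨x, hvx, hxw⟩ := TransGen.tail'_iff.mp h
  obtain ⟨k, hk⟩ := reach hvx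
  exact ⟨k + 1, mem_succList_succ_of_rel hr hk hxw⟩

/-- By left uniqueness, the first vertex that the walk from `v` revisits can only be `v`. -/
theorem mem_succList_or_nodup (hl : Relator.LeftUnique r) (k : ℕ) (v : V) :
    v ∈ succList r k v ∨ (v :: succList r k v).Nodup := by
  induction k generalizing v with
  | zero => simp [succList]
  | succ k ih =>
    rw [succList]
    split_ifs with h
    · set w := h.choose
      by_cases hv : v ∈ w :: succList r k w
      · exact Or.inl hv
      refine Or.inr (List.nodup_cons.mpr ⟨hv, (ih w).resolve_left fun hw => hv ?_⟩)
      obtain ⟨u, hu, huw⟩ := (isChain_cons_succList k w).exists_rel_of_mem hw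
      rwa [hl h.choose_spec huw]
    · simp

theorem IsSource.nodup_cons_succList (hl : Relator.LeftUnique r) {v : V} (hv : IsSource r v)
    (k : ℕ) : (v :: succList r k v).Nodup :=
  (mem_succList_or_nodup hl k v).resolve_left fun hmem =>
    let ⟨u, _, huv⟩ := (isChain_cons_succList k v).exists_rel_of_mem hmem
    hv u huv

theorem IsSource.not_onCycle {v : V} (hv : IsSource r v) : ¬ OnCycle r v := fun h =>
  let ⟨u, _, huv⟩ := TransGen.tail'_iff.mp h
  hv u huv

theorem IsSource.eq_of_reflTransGen {v x : V} (hv : IsSource r v) (h : ReflTransGen r x v) :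
    x = v := by
  rcases h.cases_tail with rfl | ⟨u, -, huv⟩
  exacts [rfl, (hv u huv).elim]

theorem IsSource.eq_of_reflTransGen_of_reflTransGen (hl : Relator.LeftUnique r) {v₁ v₂ w : V}
    (h₁ : IsSource r v₁) (h₂ : IsSource r v₂) (hw₁ : ReflTransGen r v₁ w)
    (hw₂ : ReflTransGen r v₂ w) : v₁ = v₂ := by
  have hsw : Relator.RightUnique (Function.swap r) := fun _ _ _ hb hc => hl hb hc
  rcases ReflTransGen.total_of_right_unique hsw (reflTransGen_swap.mpr hw₁)
    (reflTransGen_swap.mpr hw₂) with h | h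
  · exact (h₁.eq_of_reflTransGen (reflTransGen_swap.mp h)).symm
  · exact h₂.eq_of_reflTransGen (reflTransGen_swap.mp h)

theorem OnCycle.reflTransGen_of_rel (hr : Relator.RightUnique r) {v w : V} (hv : OnCycle r v)
    (hvw : r v w) : ReflTransGen r w v := by
  obtain ⟨u, hvu, huv⟩ := TransGen.head'_iff.mp hv
  rwa [hr hvw hvu]

theorem OnCycle.of_reflTransGen_right (hr : Relator.RightUnique r) {v w : V} (hv : OnCycle r v)
    (hvw : ReflTransGen r v w) : OnCycle r w := by
  induction hvw with
  | refl => exact hv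
  | tail _ hxy hx => exact TransGen.tail' (hx.reflTransGen_of_rel hr hxy) hxy

theorem OnCycle.reflTransGen_symm (hr : Relator.RightUnique r) {v w : V} (hv : OnCycle r v)
    (hvw : ReflTransGen r v w) : ReflTransGen r w v := by
  induction hvw with
  | refl => exact .refl
  | tail hvx hxy ih =>
    exact ((hv.of_reflTransGen_right hr hvx).reflTransGen_of_rel hr hxy).trans ih

theorem OnCycle.of_reflTransGen_left (hl : Relator.LeftUnique r) {v w : V} (hw : OnCycle r w)
    (hvw : ReflTransGen r v w) : OnCycle r v := by
  induction hvw using ReflTransGen.head_induction_on with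
  | refl => exact hw
  | head hvx _ hx =>
    obtain ⟨u, hxu, hux⟩ := TransGen.tail'_iff.mp hx
    exact TransGen.head' hvx (by rwa [hl hux hvx] at hxu)

/-- An ancestor of `w` with the fewest ancestors is a source unless it lies on a cycle. -/
theorem exists_isSource_or_onCycle [Finite V] (hr : Relator.RightUnique r) (w : V) :
    (∃ v, IsSource r v ∧ ReflTransGen r v w) ∨ OnCycle r w := by
  classical
  have := Fintype.ofFinite V
  by_contra! h
  let ancestors (x : V) : Finset V := Finset.univ.filter (ReflTransGen r · x)
  obtain ⟨x, hx, hmin⟩ := (ancestors w).exists_min_image (fun x => (ancestors x).card)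
    ⟨w, by simpa [ancestors] using ReflTransGen.refl⟩
  replace hx : ReflTransGen r x w := by simpa [ancestors] using hx
  obtain ⟨u, hux⟩ : ∃ u, r u x := by
    by_contra! hsrc
    exact h.1 x hsrc hx
  have hsub : ancestors u ⊆ ancestors x := by
    intro y hy
    simp only [ancestors, Finset.mem_filter, Finset.mem_univ, true_and] at hy ⊢
    exact hy.tail hux
  have heq := Finset.eq_of_subset_of_card_le hsub (hmin u (by simpa [ancestors] using hx.head hux))
  have hxu : x ∈ ancestors u := by
    rw [heq]
    simpa [ancestors] using ReflTransGen.refl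
  simp only [ancestors, Finset.mem_filter, Finset.mem_univ, true_and] at hxu
  exact h.2 (OnCycle.of_reflTransGen_right hr (TransGen.tail' hxu hux) hx)

variable (r) in
/-- For `v` on a cycle, `v :: cycleList r v` is that cycle: the walk from `v` stopped just before
its first return to `v`. -/
noncomputable def cycleList (v : V) : List V := open Classical in
  if h : ∃ k, v ∈ succList r k v then succList r (Nat.find h - 1) v else []

open Classical in
theorem OnCycle.isCycle_cycleList (hr : Relator.RightUnique r) (hl : Relator.LeftUnique r)
    {v : V} (hv : OnCycle r v) : IsCycle r v (cycleList r v) := by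
  have hk := exists_mem_succList_of_transGen hr hv
  rw [cycleList, dif_pos hk]
  have hp : v ∈ succList r (Nat.find hk) v := Nat.find_spec hk
  have hp0 : Nat.find hk ≠ 0 := by
    intro h0
    simp [h0, succList] at hp
  have hnot : v ∉ succList r (Nat.find hk - 1) v := Nat.find_min hk (by omega)
  refine ⟨⟨(mem_succList_or_nodup hl _ v).resolve_left hnot, isChain_cons_succList _ v⟩, ?_⟩
  rw [← Nat.sub_add_cancel (Nat.pos_of_ne_zero hp0)] at hp
  exact (mem_succList_succ hp).resolve_left hnot

variable [Fintype V]

variable (r) in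
noncomputable def stemPiece (v : V) : V × List V := (v, succList r (Fintype.card V) v)

variable (r) in
noncomputable def stems : Finset (V × List V) := open Classical in
  (Finset.univ.filter (IsSource r)).image (stemPiece r)

theorem mem_stems {s : V × List V} :
    s ∈ stems r ↔ ∃ v, IsSource r v ∧ stemPiece r v = s := by
  simp [stems]

theorem IsSource.not_rel_stemTip (hl : Relator.LeftUnique r) {v : V} (hv : IsSource r v)
    (w : V) : ¬ r (stemTip v (succList r (Fintype.card V) v)) w := by
  refine not_rel_stemTip_of_length_succList_lt ?_ w
  simpa using (hv.nodup_cons_succList hl _).length_le_card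

theorem IsSource.mem_stemPiece_iff (hr : Relator.RightUnique r) (hl : Relator.LeftUnique r)
    {v w : V} (hv : IsSource r v) : w ∈ pieceVerts (stemPiece r v) ↔ ReflTransGen r v w :=
  (isChain_cons_succList _ v).mem_cons_iff_reflTransGen hr fun i hi =>
    (hv.not_rel_stemTip hl i hi).elim

theorem isStem_of_mem_stems (hl : Relator.LeftUnique r) {s : V × List V} (hs : s ∈ stems r) :
    IsStem r s.1 s.2 := by
  obtain ⟨v, hv, rfl⟩ := mem_stems.mp hs
  exact ⟨hv.nodup_cons_succList hl _, isChain_cons_succList _ v⟩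

theorem mem_stemEdges_of_mem_stems (hr : Relator.RightUnique r) (hl : Relator.LeftUnique r)
    {s : V × List V} (hs : s ∈ stems r) {a b : V} (ha : a ∈ pieceVerts s) (hab : r a b) :
    (a, b) ∈ stemEdges s.1 s.2 := by
  obtain ⟨v, hv, rfl⟩ := mem_stems.mp hs
  refine ((isChain_cons_succList _ v).mem_stemEdges_or_eq_stemTip hr ha hab).resolve_right ?_
  rintro rfl
  exact hv.not_rel_stemTip hl b hab

theorem exists_mem_stems_fst_eq_iff (v : V) : (∃ s ∈ stems r, s.1 = v) ↔ IsSource r v := by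
  simp [stems, stemPiece]

variable [LinearOrder V]

variable (r) in
/-- Picks one representative on each cycle. -/
noncomputable def minReachable (v : V) : V := open Classical in
  (Finset.univ.filter (ReflTransGen r v)).min' ⟨v, by simpa using ReflTransGen.refl⟩

theorem reflTransGen_minReachable (v : V) : ReflTransGen r v (minReachable r v) := by
  classical
  unfold minReachable
  exact (Finset.mem_filter.mp (Finset.min'_mem _ _)).2

theorem OnCycle.minReachable_eq (hr : Relator.RightUnique r) {v w : V} (hv : OnCycle r v)
    (hvw : ReflTransGen r v w) : minReachable r w = minReachable r v := by
  classical
  have : Finset.univ.filter (ReflTransGen r w) = Finset.univ.filter (ReflTransGen r v) := by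
    ext x
    simpa using ⟨hvw.trans, (hv.reflTransGen_symm hr hvw).trans⟩
  unfold minReachable
  congr 1

variable (r) in
noncomputable def cyclePiece (v : V) : V × List V :=
  (minReachable r v, cycleList r (minReachable r v))

variable (r) in
noncomputable def cycles : Finset (V × List V) := open Classical in
  (Finset.univ.filter (OnCycle r)).image (cyclePiece r)

variable (r) in
noncomputable def pieceOf (w : V) : V × List V := open Classical in
  if h : ∃ v, IsSource r v ∧ ReflTransGen r v w then stemPiece r h.choose else cyclePiece r w

theorem mem_cycles {s : V × List V} :
    s ∈ cycles r ↔ ∃ v, OnCycle r v ∧ cyclePiece r v = s := by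
  simp [cycles]

theorem OnCycle.isCycle_cyclePiece (hr : Relator.RightUnique r) (hl : Relator.LeftUnique r)
    {v : V} (hv : OnCycle r v) : IsCycle r (cyclePiece r v).1 (cyclePiece r v).2 :=
  (hv.of_reflTransGen_right hr (reflTransGen_minReachable v)).isCycle_cycleList hr hl

theorem OnCycle.mem_cyclePiece_iff (hr : Relator.RightUnique r) (hl : Relator.LeftUnique r)
    {v w : V} (hv : OnCycle r v) : w ∈ pieceVerts (cyclePiece r v) ↔ ReflTransGen r v w := by
  have hc := hv.isCycle_cyclePiece hr hl
  have hmin := reflTransGen_minReachable (r := r) v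
  rw [pieceVerts, hc.1.2.mem_cons_iff_reflTransGen hr fun i hi => by
    rw [hr hi hc.2]
    exact List.mem_cons_self]
  exact ⟨hmin.trans, (hv.reflTransGen_symm hr hmin).trans⟩

theorem isCycle_of_mem_cycles (hr : Relator.RightUnique r) (hl : Relator.LeftUnique r)
    {c : V × List V} (hc : c ∈ cycles r) : IsCycle r c.1 c.2 := by
  obtain ⟨v, hv, rfl⟩ := mem_cycles.mp hc
  exact hv.isCycle_cyclePiece hr hl

theorem disjoint_stems_cycles (hr : Relator.RightUnique r) : Disjoint (stems r) (cycles r) := by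
  refine Finset.disjoint_left.mpr fun s hs hc => ?_
  obtain ⟨v, hv, rfl⟩ := mem_stems.mp hs
  obtain ⟨w, hw, hvw⟩ := mem_cycles.mp hc
  obtain rfl : minReachable r w = v := congrArg Prod.fst hvw
  exact hv.not_onCycle (hw.of_reflTransGen_right hr (reflTransGen_minReachable w))

theorem pieceOf_mem (hr : Relator.RightUnique r) (w : V) :
    pieceOf r w ∈ stems r ∪ cycles r := by
  unfold pieceOf
  split_ifs with h
  · exact Finset.mem_union_left _ (mem_stems.mpr ⟨_, h.choose_spec.1, rfl⟩)
  · have hw := (exists_isSource_or_onCycle hr w).resolve_left h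
    exact Finset.mem_union_right _ (mem_cycles.mpr ⟨w, hw, rfl⟩)

theorem mem_pieceVerts_pieceOf (hr : Relator.RightUnique r) (hl : Relator.LeftUnique r)
    (w : V) : w ∈ pieceVerts (pieceOf r w) := by
  unfold pieceOf
  split_ifs with h
  · exact (h.choose_spec.1.mem_stemPiece_iff hr hl).mpr h.choose_spec.2
  · have hw := (exists_isSource_or_onCycle hr w).resolve_left h
    exact (hw.mem_cyclePiece_iff hr hl).mpr .refl

theorem eq_pieceOf_of_mem_pieceVerts (hr : Relator.RightUnique r) (hl : Relator.LeftUnique r)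
    {s : V × List V} (hs : s ∈ stems r ∪ cycles r) {w : V} (hw : w ∈ pieceVerts s) :
    s = pieceOf r w := by
  unfold pieceOf
  rcases Finset.mem_union.mp hs with hs | hs
  · obtain ⟨v, hv, rfl⟩ := mem_stems.mp hs
    have hvw := (hv.mem_stemPiece_iff hr hl).mp hw
    have h : ∃ v, IsSource r v ∧ ReflTransGen r v w := ⟨v, hv, hvw⟩
    rw [dif_pos h, IsSource.eq_of_reflTransGen_of_reflTransGen hl h.choose_spec.1 hv
      h.choose_spec.2 hvw]
  · obtain ⟨v, hv, rfl⟩ := mem_cycles.mp hs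
    have hvw := (hv.mem_cyclePiece_iff hr hl).mp hw
    have hwc := hv.of_reflTransGen_right hr hvw
    rw [dif_neg fun ⟨_, hu, huw⟩ => hu.not_onCycle (hwc.of_reflTransGen_left hl huw),
      cyclePiece, cyclePiece, hv.minReachable_eq hr hvw]

theorem mem_cycleEdges_of_mem_cycles (hr : Relator.RightUnique r) (hl : Relator.LeftUnique r)
    {c : V × List V} (hc : c ∈ cycles r) {a b : V} (ha : a ∈ pieceVerts c) (hab : r a b) :
    (a, b) ∈ cycleEdges c.1 c.2 := by
  have hcyc := isCycle_of_mem_cycles hr hl hc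
  rw [cycleEdges_eq_stemEdges_append, List.mem_append, List.mem_singleton]
  refine (hcyc.1.2.mem_stemEdges_or_eq_stemTip hr ha hab).imp_right ?_
  rintro rfl
  rw [hr hab hcyc.2]

theorem rel_iff_mem_stemEdges_or_mem_cycleEdges (hr : Relator.RightUnique r)
    (hl : Relator.LeftUnique r) (a b : V) :
    r a b ↔ (∃ s ∈ stems r, (a, b) ∈ stemEdges s.1 s.2) ∨
      ∃ c ∈ cycles r, (a, b) ∈ cycleEdges c.1 c.2 := by
  constructor
  · intro hab
    rcases Finset.mem_union.mp (pieceOf_mem hr a) with hs | hc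
    · exact Or.inl ⟨_, hs, mem_stemEdges_of_mem_stems hr hl hs
        (mem_pieceVerts_pieceOf hr hl a) hab⟩
    · exact Or.inr ⟨_, hc, mem_cycleEdges_of_mem_cycles hr hl hc
        (mem_pieceVerts_pieceOf hr hl a) hab⟩
  · rintro (⟨s, hs, he⟩ | ⟨c, hc, he⟩)
    · exact (isStem_of_mem_stems hl hs).2.rel_of_mem_stemEdges he
    · exact (isCycle_of_mem_cycles hr hl hc).rel_of_mem_cycleEdges he

end Relation

section Matching

variable {α : Type*} {E M : Finset (α × α)}

theorem IsMatching.rightUnique (h : IsMatching E M) :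
    Relator.RightUnique fun a b => (a, b) ∈ M :=
  fun _ _ _ hb hc => congrArg Prod.snd (h.2.1 _ hb _ hc rfl)

theorem IsMatching.leftUnique (h : IsMatching E M) :
    Relator.LeftUnique fun a b => (a, b) ∈ M :=
  fun _ _ _ ha hb => congrArg Prod.fst (h.2.2 _ ha _ hb rfl)

theorem rightUnmatched_iff_isSource {v : α} :
    RightUnmatched M v ↔ Relation.IsSource (fun a b => (a, b) ∈ M) v :=
  ⟨fun h _ hu => h _ hu rfl, fun h e he hev => h e.1 (hev ▸ he)⟩

end Matching

open Relation

theorem maximum_matching_decomposition_general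
    {n : ℕ} (Ab : Matrix (Fin n) (Fin n) Bool) (M : Finset (Fin n × Fin n))
    (hM : IsMaxMatching (stateEdgeFinset Ab) M) :
    ∃ Stems Cycles : Finset (Fin n × List (Fin n)),
      (∀ s ∈ Stems, IsStem (stateEdge Ab) s.1 s.2) ∧
      (∀ c ∈ Cycles, IsCycle (stateEdge Ab) c.1 c.2) ∧
      Disjoint Stems Cycles ∧
      (∀ s ∈ Stems ∪ Cycles, ∀ t ∈ Stems ∪ Cycles, s ≠ t →
        ∀ v, v ∈ pieceVerts s → v ∉ pieceVerts t) ∧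
      (∀ v : Fin n, ∃ s ∈ Stems ∪ Cycles, v ∈ pieceVerts s) ∧
      (∀ e : Fin n × Fin n, e ∈ M ↔
        (∃ s ∈ Stems, e ∈ stemEdges s.1 s.2) ∨ ∃ c ∈ Cycles, e ∈ cycleEdges c.1 c.2) ∧
      (∀ v : Fin n, (∃ s ∈ Stems, s.1 = v) ↔ RightUnmatched M v) := by
  set r : Fin n → Fin n → Prop := fun a b => (a, b) ∈ M
  have hr := hM.1.rightUnique
  have hl := hM.1.leftUnique
  have hedge (a b : Fin n) (h : r a b) : stateEdge Ab a b := (Finset.mem_filter.mp (hM.1.1 h)).2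
  refine ⟨stems r, cycles r, fun s hs => (isStem_of_mem_stems hl hs).mono hedge,
    fun c hc => (isCycle_of_mem_cycles hr hl hc).mono hedge, disjoint_stems_cycles hr, ?_,
    fun v => ⟨pieceOf r v, pieceOf_mem hr v, mem_pieceVerts_pieceOf hr hl v⟩,
    fun e => rel_iff_mem_stemEdges_or_mem_cycleEdges hr hl e.1 e.2,
    fun v => (exists_mem_stems_fst_eq_iff v).trans rightUnmatched_iff_isSource.symm⟩
  intro s hs t ht hst v hvs hvt
  exact hst ((eq_pieceOf_of_mem_pieceVerts hr hl hs hvs).trans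
    (eq_pieceOf_of_mem_pieceVerts hr hl ht hvt).symm)

/-- If a maximum matching `M*` of `B(X, X, E)` has a nonempty set of
right-unmatched vertices, then its edges (viewed in `D(Ā)`), together with the isolated
vertices, form a spanning, vertex-disjoint union of directed cycles and state stems,
the roots of the state stems being exactly the right-unmatched vertices of `M*`. -/
theorem maximum_matching_decomposition
    {n : ℕ} (Ab : Matrix (Fin n) (Fin n) Bool) (M : Finset (Fin n × Fin n))
    (hM : IsMaxMatching (stateEdgeFinset Ab) M)
    (hne : ∃ v : Fin n, RightUnmatched M v) :
    ∃ Stems Cycles : Finset (Fin n × List (Fin n)),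
      (∀ s ∈ Stems, IsStem (stateEdge Ab) s.1 s.2) ∧
      (∀ c ∈ Cycles, IsCycle (stateEdge Ab) c.1 c.2) ∧
      Disjoint Stems Cycles ∧
      (∀ s ∈ Stems ∪ Cycles, ∀ t ∈ Stems ∪ Cycles, s ≠ t →
        ∀ v, v ∈ pieceVerts s → v ∉ pieceVerts t) ∧
      (∀ v : Fin n, ∃ s ∈ Stems ∪ Cycles, v ∈ pieceVerts s) ∧
      (∀ e : Fin n × Fin n, e ∈ M ↔
        (∃ s ∈ Stems, e ∈ stemEdges s.1 s.2) ∨ ∃ c ∈ Cycles, e ∈ cycleEdges c.1 c.2) ∧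
      (∀ v : Fin n, (∃ s ∈ Stems, s.1 = v) ↔ RightUnmatched M v) :=
  maximum_matching_decomposition_general Ab M hM
end

section
/- Let D(Ā) = (X, E) be the state digraph of a structural pattern Ā and let M* be a maximum matching of the bipartite graph B(X, X, E) with m right-unmatched vertices. Then the spanning decomposition of D(Ā) induced by M* into vertex-disjoint state stems and cycles is minimal: every spanning subgraph of D(Ā) that is a vertex-disjoint union of state stems and cycles covering all vertices contains at least m state stems. -/
/-! The edges of a spanning decomposition of `D(Ā)` into vertex-disjoint stems and cycles form a
matching of `B(X, X, E)`: every vertex has at most one outgoing and at most one incoming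
decomposition edge. A stem on `k` vertices carries `k - 1` edges and a cycle on `k` vertices carries
`k`, so this matching has `n - #stems` edges. A maximum matching `M*` has at least as many, and it
leaves exactly `n - |M*|` right vertices unmatched. -/

section Matching

variable {α β : Type*} {E M : Finset (α × β)}

lemma isMatching_toFinset [DecidableEq α] [DecidableEq β] {es : List (α × β)}
    (hE : ∀ e ∈ es, e ∈ E) (hfst : (es.map Prod.fst).Nodup) (hsnd : (es.map Prod.snd).Nodup) :
    IsMatching E es.toFinset := by
  refine ⟨fun e he => hE e (List.mem_toFinset.1 he), ?_, ?_⟩ <;> intro e he f hf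
  · exact List.inj_on_of_nodup_map hfst (List.mem_toFinset.1 he) (List.mem_toFinset.1 hf)
  · exact List.inj_on_of_nodup_map hsnd (List.mem_toFinset.1 he) (List.mem_toFinset.1 hf)

lemma ncard_unmatchedSet_add_card [Fintype β] (hM : IsMatching E M) :
    (unmatchedSet M).ncard + M.card = Fintype.card β := by
  classical
  have hunmatched : unmatchedSet M = ↑(Finset.univ \ M.image Prod.snd) := by
    ext v
    simp only [unmatchedSet, RightUnmatched, Set.mem_ofPred_eq, Finset.coe_sdiff, Finset.coe_univ,
      Finset.coe_image, Set.mem_sdiff, Set.mem_univ, Set.mem_image, Finset.mem_coe, true_and,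
      not_exists, not_and]
  have hcard : (M.image Prod.snd).card = M.card :=
    Finset.card_image_of_injOn fun e he f hf => hM.2.2 e he f hf
  rw [hunmatched, Set.ncard_coe_finset, Finset.card_sdiff_of_subset (Finset.subset_univ _),
    Finset.card_univ, hcard, Nat.sub_add_cancel (hcard ▸ Finset.card_le_univ _)]

end Matching

lemma isMatching_biUnion {ι V : Type*} [DecidableEq V] {E : Finset (V × V)} {P : Finset ι}
    {F : ι → Finset (V × V)} {vs : ι → Finset V} (hF : ∀ i ∈ P, IsMatching E (F i))
    (hvs : ∀ i ∈ P, ∀ e ∈ F i, e.1 ∈ vs i ∧ e.2 ∈ vs i) (hdisj : (P : Set ι).PairwiseDisjoint vs) :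
    IsMatching E (P.biUnion F) := by
  have same_piece : ∀ i ∈ P, ∀ j ∈ P, ∀ e ∈ F i, ∀ f ∈ F j, e.1 = f.1 ∨ e.2 = f.2 → i = j := by
    intro i hi j hj e he f hf hef
    by_contra hij
    have hvij := Finset.disjoint_left.1 (hdisj hi hj hij)
    rcases hef with h | h
    · exact hvij (hvs i hi e he).1 (h ▸ (hvs j hj f hf).1)
    · exact hvij (hvs i hi e he).2 (h ▸ (hvs j hj f hf).2)
  simp only [IsMatching, Finset.biUnion_subset, Finset.mem_biUnion, forall_exists_index, and_imp]
  refine ⟨fun i hi => (hF i hi).1, ?_, ?_⟩ <;> intro e i hi he f j hj hf hef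
  · obtain rfl := same_piece i hi j hj e he f hf (.inl hef)
    exact (hF i hi).2.1 e he f hf hef
  · obtain rfl := same_piece i hi j hj e he f hf (.inr hef)
    exact (hF i hi).2.2 e he f hf hef

section Pieces

variable {V : Type*} {edge : V → V → Prop} {r a : V} {l : List V}

@[simp]
lemma stemEdges_nil : stemEdges r [] = [] := rfl

@[simp]
lemma stemEdges_cons_s3 : stemEdges r (a :: l) = (r, a) :: stemEdges a l := rfl

lemma cycleEdges_eq_stemEdges : cycleEdges r l = stemEdges r (l ++ [r]) := by
  rw [cycleEdges, stemEdges, ← List.cons_append, ← List.append_nil (l ++ [r]),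
    List.zip_append (by simp)]
  simp

lemma map_fst_stemEdges : (stemEdges r l).map Prod.fst = (r :: l).dropLast := by
  induction l generalizing r with
  | nil => rfl
  | cons a l ih => simp [ih]

lemma map_snd_stemEdges : (stemEdges r l).map Prod.snd = l :=
  List.map_snd_zip (by simp)

lemma map_fst_cycleEdges : (cycleEdges r l).map Prod.fst = r :: l :=
  List.map_fst_zip (by simp)

lemma map_snd_cycleEdges : (cycleEdges r l).map Prod.snd = l ++ [r] :=
  List.map_snd_zip (by simp)

lemma mem_of_mem_stemEdges {e : V × V} (he : e ∈ stemEdges r l) : e.1 ∈ r :: l ∧ e.2 ∈ r :: l :=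
  ⟨List.dropLast_subset _ (map_fst_stemEdges ▸ List.mem_map_of_mem he),
    List.mem_cons_of_mem _ (map_snd_stemEdges (r := r) (l := l) ▸ List.mem_map_of_mem he)⟩

lemma mem_of_mem_cycleEdges {e : V × V} (he : e ∈ cycleEdges r l) :
    e.1 ∈ r :: l ∧ e.2 ∈ r :: l := by
  rw [cycleEdges_eq_stemEdges] at he
  simpa [or_comm, or_left_comm] using mem_of_mem_stemEdges he

lemma List.IsChain.rel_of_mem_stemEdges_s3 (h : (r :: l).IsChain edge) {e : V × V}
    (he : e ∈ stemEdges r l) : edge e.1 e.2 := by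
  induction l generalizing r with
  | nil => simp at he
  | cons a l ih =>
    obtain ⟨hra, hl⟩ := List.isChain_cons_cons.mp h
    rcases List.mem_cons.mp he with rfl | he
    exacts [hra, ih hl he]

lemma IsCycle.isChain_append (h : IsCycle edge r l) : (r :: (l ++ [r])).IsChain edge :=
  h.1.2.append (.singleton r) (by simpa [stemTip, List.getLast?_eq_some_getLast] using h.2)

lemma IsStem.isMatching_stemEdges [DecidableEq V] {E : Finset (V × V)} (h : IsStem edge r l)
    (hE : ∀ a b, edge a b → (a, b) ∈ E) :
    IsMatching E (stemEdges r l).toFinset :=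
  isMatching_toFinset (fun _ he => hE _ _ (List.IsChain.rel_of_mem_stemEdges_s3 h.2 he))
    (map_fst_stemEdges ▸ h.1.sublist (List.dropLast_sublist _))
    (map_snd_stemEdges (r := r) ▸ h.1.of_cons)

lemma IsCycle.isMatching_cycleEdges [DecidableEq V] {E : Finset (V × V)} (h : IsCycle edge r l)
    (hE : ∀ a b, edge a b → (a, b) ∈ E) :
    IsMatching E (cycleEdges r l).toFinset :=
  isMatching_toFinset
    (fun _ he => hE _ _ (h.isChain_append.rel_of_mem_stemEdges_s3 (cycleEdges_eq_stemEdges ▸ he)))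
    (map_fst_cycleEdges ▸ h.1.1)
    (map_snd_cycleEdges ▸ (List.perm_append_singleton r l).nodup_iff.2 h.1.1)

end Pieces

section Decomposition

variable {V : Type*} [DecidableEq V] {Stems Cycles : Finset (V × List V)}

def decompEdges (Stems : Finset (V × List V)) (s : V × List V) : Finset (V × V) :=
  if s ∈ Stems then (stemEdges s.1 s.2).toFinset else (cycleEdges s.1 s.2).toFinset

lemma mem_pieceVerts_of_mem_decompEdges {s : V × List V} {e : V × V}
    (he : e ∈ decompEdges Stems s) : e.1 ∈ pieceVerts s ∧ e.2 ∈ pieceVerts s := by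
  unfold decompEdges at he
  split_ifs at he
  · exact mem_of_mem_stemEdges (List.mem_toFinset.1 he)
  · exact mem_of_mem_cycleEdges (List.mem_toFinset.1 he)

lemma card_decompEdges_add_ite {s : V × List V} (h : (pieceVerts s).Nodup) :
    (decompEdges Stems s).card + (if s ∈ Stems then 1 else 0) = (pieceVerts s).length := by
  unfold decompEdges
  split_ifs
  · have hnodup : (stemEdges s.1 s.2).Nodup :=
      .of_map Prod.snd (by rw [map_snd_stemEdges]; exact h.of_cons)
    rw [List.toFinset_card_of_nodup hnodup]
    simp [stemEdges, pieceVerts]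
  · have hnodup : (cycleEdges s.1 s.2).Nodup :=
      .of_map Prod.fst (by rw [map_fst_cycleEdges]; exact h)
    rw [List.toFinset_card_of_nodup hnodup]
    simp [cycleEdges, pieceVerts]

lemma isMatching_decompEdges {edge : V → V → Prop} {E : Finset (V × V)}
    (hE : ∀ a b, edge a b → (a, b) ∈ E) (hstems : ∀ s ∈ Stems, IsStem edge s.1 s.2)
    (hcycles : ∀ c ∈ Cycles, IsCycle edge c.1 c.2)
    (hdisj : (↑(Stems ∪ Cycles) : Set (V × List V)).PairwiseDisjoint
      fun s => (pieceVerts s).toFinset) :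
    IsMatching E ((Stems ∪ Cycles).biUnion (decompEdges Stems)) := by
  refine isMatching_biUnion (fun s hs => ?_)
    (fun s _ e he => by simpa using mem_pieceVerts_of_mem_decompEdges he) hdisj
  unfold decompEdges
  split_ifs with h
  · exact (hstems s h).isMatching_stemEdges hE
  · exact (hcycles s ((Finset.mem_union.1 hs).resolve_left h)).isMatching_cycleEdges hE

lemma card_biUnion_decompEdges_add_card (hnodup : ∀ s ∈ Stems ∪ Cycles, (pieceVerts s).Nodup)
    (hdisj : (↑(Stems ∪ Cycles) : Set (V × List V)).PairwiseDisjoint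
      fun s => (pieceVerts s).toFinset) :
    ((Stems ∪ Cycles).biUnion (decompEdges Stems)).card + Stems.card =
      ∑ s ∈ Stems ∪ Cycles, (pieceVerts s).length := by
  have hedges : (↑(Stems ∪ Cycles) : Set (V × List V)).PairwiseDisjoint (decompEdges Stems) :=
    fun s hs t ht hst => Finset.disjoint_left.2 fun e hes het =>
      Finset.disjoint_left.1 (hdisj hs ht hst)
        (by simpa using (mem_pieceVerts_of_mem_decompEdges hes).2)
        (by simpa using (mem_pieceVerts_of_mem_decompEdges het).2)
  have hstems : Stems.card = ∑ s ∈ Stems ∪ Cycles, if s ∈ Stems then 1 else 0 := by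
    rw [Finset.sum_boole, Finset.filter_mem_eq_inter, Finset.union_inter_cancel_left, Nat.cast_id]
  rw [Finset.card_biUnion hedges, hstems, ← Finset.sum_add_distrib]
  exact Finset.sum_congr rfl fun s hs => card_decompEdges_add_ite (hnodup s hs)

lemma sum_length_pieceVerts [Fintype V] {P : Finset (V × List V)}
    (hnodup : ∀ s ∈ P, (pieceVerts s).Nodup)
    (hdisj : (P : Set (V × List V)).PairwiseDisjoint fun s => (pieceVerts s).toFinset)
    (hspan : ∀ v : V, ∃ s ∈ P, v ∈ pieceVerts s) :
    ∑ s ∈ P, (pieceVerts s).length = Fintype.card V := by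
  have hcover : P.biUnion (fun s => (pieceVerts s).toFinset) = Finset.univ :=
    Finset.eq_univ_of_forall fun v => by simpa using hspan v
  rw [← Finset.card_univ, ← hcover, Finset.card_biUnion hdisj]
  exact Finset.sum_congr rfl fun s hs => (List.toFinset_card_of_nodup (hnodup s hs)).symm

end Decomposition

theorem maximum_matching_decomposition_minimal_general
    {n : ℕ} (Ab : Matrix (Fin n) (Fin n) Bool) (M : Finset (Fin n × Fin n))
    (hM : IsMaxMatching (stateEdgeFinset Ab) M)
    (Stems Cycles : Finset (Fin n × List (Fin n)))
    (hstems : ∀ s ∈ Stems, IsStem (stateEdge Ab) s.1 s.2)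
    (hcycles : ∀ c ∈ Cycles, IsCycle (stateEdge Ab) c.1 c.2)
    (hdisj : ∀ s ∈ Stems ∪ Cycles, ∀ t ∈ Stems ∪ Cycles, s ≠ t →
      ∀ v, v ∈ pieceVerts s → v ∉ pieceVerts t)
    (hspan : ∀ v : Fin n, ∃ s ∈ Stems ∪ Cycles, v ∈ pieceVerts s) :
    Set.ncard (unmatchedSet M) ≤ Stems.card := by
  have hE : ∀ a b, stateEdge Ab a b → (a, b) ∈ stateEdgeFinset Ab := by
    simp [stateEdge, stateEdgeFinset]
  have hnodup : ∀ s ∈ Stems ∪ Cycles, (pieceVerts s).Nodup := fun s hs =>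
    (Finset.mem_union.1 hs).elim (fun h => (hstems s h).1) fun h => (hcycles s h).1.1
  have hdisj' : (↑(Stems ∪ Cycles) : Set (Fin n × List (Fin n))).PairwiseDisjoint
      fun s => (pieceVerts s).toFinset :=
    fun s hs t ht hst => Finset.disjoint_left.2 fun v hvs hvt =>
      hdisj s hs t ht hst v (List.mem_toFinset.1 hvs) (List.mem_toFinset.1 hvt)
  have hle := hM.2 _ (isMatching_decompEdges hE hstems hcycles hdisj')
  have hdecomp := card_biUnion_decompEdges_add_card hnodup hdisj'
  have hverts := sum_length_pieceVerts hnodup hdisj' hspan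
  have hunmatched := ncard_unmatchedSet_add_card hM.1
  rw [Fintype.card_fin] at hverts hunmatched
  omega

/-- The decomposition induced by a maximum matching is minimal: every
spanning decomposition of `D(Ā)` into vertex-disjoint state stems and cycles contains at
least as many state stems as there are right-unmatched vertices of a maximum matching. -/
theorem maximum_matching_decomposition_minimal
    {n : ℕ} (Ab : Matrix (Fin n) (Fin n) Bool) (M : Finset (Fin n × Fin n))
    (hM : IsMaxMatching (stateEdgeFinset Ab) M)
    (Stems Cycles : Finset (Fin n × List (Fin n)))
    (hstems : ∀ s ∈ Stems, IsStem (stateEdge Ab) s.1 s.2)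
    (hcycles : ∀ c ∈ Cycles, IsCycle (stateEdge Ab) c.1 c.2)
    (hdisjSC : Disjoint Stems Cycles)
    (hdisj : ∀ s ∈ Stems ∪ Cycles, ∀ t ∈ Stems ∪ Cycles, s ≠ t →
      ∀ v, v ∈ pieceVerts s → v ∉ pieceVerts t)
    (hspan : ∀ v : Fin n, ∃ s ∈ Stems ∪ Cycles, v ∈ pieceVerts s) :
    Set.ncard (unmatchedSet M) ≤ Stems.card :=
  maximum_matching_decomposition_minimal_general Ab M hM Stems Cycles hstems hcycles hdisj hspan
end

section
/- Let Ā ∈ {0,*}^{n×n} be a structural pattern whose state digraph D(Ā) = (X, E) is strongly connected, and suppose the bipartite graph B(X, X, E) admits a perfect matching. Then the minimum number of dedicated inputs p for which there exists a dedicated input pattern B̄ ∈ {0,*}^{n×p} with (Ā, B̄) structurally controllable equals 1. -/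
/-!
A perfect matching of `B(X, X, E)` is a cycle cover `τ` of `D(Ā)`. By strong connectivity, every
cycle other than the one through the root `x₀` can be entered by a bridge edge from a cycle closer
to `x₀`; keep one such bridge per cycle. Realize `Ā` by a weight `t_C > 0` on the edges of each
cycle `C`, distinct for distinct cycles, by `1` on the bridges and by `0` elsewhere, and feed the
input into `x₀`.

By the Popov–Belevitch–Hautus test it suffices that every left eigenvector `v`, i.e.
`μ v_j = t_j v_{τ j} + ∑_{bridges b out of j} v_{tgt b}`, has `v_{x₀} ≠ 0`. On a cycle of maximal
rank in the support of `v` nothing flows in, so `|μ| = t_C`; every other cycle is then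
non-resonant. A non-resonant cycle without inflow carries `v = 0`, which kills `v` on every cycle
off the bridge path from `C` down to the root cycle; along that path each cycle receives exactly one
nonzero inflow, which forces `v ≠ 0` on the whole cycle, in particular at `x₀`.
-/

open Equiv Function Matrix

section Krylov

variable {K ι κ : Type*} [Fintype ι] [DecidableEq ι]

theorem vecMul_pow_mul_eq_zero_of_lt_card [CommRing K] [Nontrivial K] {A : Matrix ι ι K}
    {B : Matrix ι κ K} {x : ι → K} (hx : ∀ k < Fintype.card ι, x ᵥ* (A ^ k * B) = 0) (k : ℕ) :
    x ᵥ* (A ^ k * B) = 0 := by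
  rcases isEmpty_or_nonempty ι with hι | hι
  · exact Subsingleton.elim (α := ι → K) x 0 ▸ zero_vecMul _
  have hdeg : (Polynomial.X ^ k %ₘ A.charpoly).natDegree < Fintype.card ι := by
    rw [← A.charpoly_natDegree_eq_dim]
    refine Polynomial.natDegree_modByMonic_lt _ A.charpoly_monic fun h => ?_
    simpa [A.charpoly_natDegree_eq_dim, Fintype.card_ne_zero] using congrArg Polynomial.natDegree h
  rw [pow_eq_aeval_mod_charpoly, Polynomial.aeval_eq_sum_range' hdeg, Matrix.sum_mul, vecMul_sum]
  exact Finset.sum_eq_zero fun a ha => by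
    rw [smul_mul, vecMul_smul, hx a (Finset.mem_range.1 ha), smul_zero]

theorem eq_zero_of_forall_vecMul_pow_mul_eq_zero [Field K] [IsAlgClosed K] {A : Matrix ι ι K}
    {B : Matrix ι κ K} (hA : ∀ (μ : K) (v : ι → K), v ᵥ* A = μ • v → v ≠ 0 → v ᵥ* B ≠ 0)
    {x : ι → K} (hx : ∀ k, x ᵥ* (A ^ k * B) = 0) : x = 0 := by
  set W : Submodule K (ι → K) := ⨅ k, LinearMap.ker (vecMulLinear (A ^ k * B))
  have hW : ∀ y ∈ W, vecMulLinear A y ∈ W := by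
    simp only [W, Submodule.mem_iInf, LinearMap.mem_ker, coe_vecMulLinear]
    intro y hy k
    rw [vecMul_vecMul, ← Matrix.mul_assoc, ← pow_succ', hy]
  have hWbot : W = ⊥ := by
    by_contra hne
    have : Nontrivial W := Submodule.nontrivial_iff_ne_bot.2 hne
    obtain ⟨μ, hμ⟩ := Module.End.exists_eigenvalue ((vecMulLinear A).restrict hW)
    obtain ⟨y, hy⟩ := hμ.exists_hasEigenvector
    have hyW : ∀ k, (y : ι → K) ᵥ* (A ^ k * B) = 0 := by
      simpa only [W, Submodule.mem_iInf, LinearMap.mem_ker, coe_vecMulLinear] using y.2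
    refine hA μ y ?_ (by simpa using hy.2) (by simpa using hyW 0)
    simpa [Subtype.ext_iff] using hy.apply_eq_smul
  simpa [W, hWbot] using (show x ∈ W by simpa [W] using hx)

end Krylov

theorem rank_ctrbMatrix_eq {n p : ℕ} {A : Matrix (Fin n) (Fin n) ℝ} {B : Matrix (Fin n) (Fin p) ℝ}
    (hA : ∀ (μ : ℂ) (v : Fin n → ℂ), v ᵥ* A.map (↑) = μ • v → v ≠ 0 → v ᵥ* B.map (↑) ≠ 0) :
    (ctrbMatrix A B).rank = n := by
  suffices LinearIndependent ℝ (ctrbMatrix A B).row by simpa using this.rank_matrix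
  rw [← vecMul_injective_iff, ← coe_vecMulLinear, injective_iff_map_eq_zero]
  intro x hx
  have hcx : ∀ k, (Complex.ofRealHom ∘ x) ᵥ*
      (A.map Complex.ofRealHom ^ k * B.map Complex.ofRealHom) = 0 := by
    refine vecMul_pow_mul_eq_zero_of_lt_card fun k hk => funext fun j => ?_
    have hkj : (x ᵥ* (A ^ k * B)) j = 0 := congrFun hx (⟨k, by simpa using hk⟩, j)
    rw [← Matrix.map_pow, ← Matrix.map_mul, ← RingHom.map_vecMul, hkj, map_zero]
    rfl
  funext i
  simpa using congrFun (eq_zero_of_forall_vecMul_pow_mul_eq_zero hA hcx) i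

section Reachability

variable {ι : Type*}

def ReachableIn (E : ι → ι → Prop) (r : ι) : ℕ → ι → Prop
  | 0, v => v = r
  | k + 1, v => ∃ u, ReachableIn E r k u ∧ E u v

theorem exists_reachableIn_of_reflTransGen {E : ι → ι → Prop} {r v : ι}
    (h : Relation.ReflTransGen E r v) : ∃ k, ReachableIn E r k v := by
  induction h with
  | refl => exact ⟨0, rfl⟩
  | tail _ huv ih => exact ih.elim fun k hk => ⟨k + 1, _, hk, huv⟩

/-- `rk i` is the distance from `r` to the class of `i`. -/
theorem exists_rank_of_forall_reflTransGen (E : ι → ι → Prop) (s : Setoid ι) {r : ι}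
    (hr : ∀ v, Relation.ReflTransGen E r v) :
    ∃ rk : ι → ℕ, (∀ i j, s i j → rk i = rk j) ∧
      ∀ i, ¬ s r i → ∃ u w, s i w ∧ E u w ∧ rk u < rk i := by
  classical
  have hex (i : ι) : ∃ k, ∃ j, s i j ∧ ReachableIn E r k j :=
    (exists_reachableIn_of_reflTransGen (hr i)).elim fun k hk => ⟨k, i, s.refl i, hk⟩
  refine ⟨fun i => Nat.find (hex i), fun i j hij => Nat.find_congr' fun {k} =>
    ⟨fun ⟨l, hl, hk⟩ => ⟨l, s.trans (s.symm hij) hl, hk⟩,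
      fun ⟨l, hl, hk⟩ => ⟨l, s.trans hij hl, hk⟩⟩, fun i hi => ?_⟩
  obtain ⟨j, hij, hj⟩ := Nat.find_spec (hex i)
  rcases hk : Nat.find (hex i) with _ | k
  · rw [hk] at hj
    exact absurd (s.symm (hj ▸ hij)) hi
  · rw [hk] at hj
    obtain ⟨u, hu, huj⟩ := hj
    refine ⟨u, j, hij, huj, ?_⟩
    simpa only [hk] using Nat.lt_succ_of_le (Nat.find_le (h := hex u) ⟨u, s.refl u, hu⟩)

end Reachability

theorem exists_pos_eq_iff_setoid {ι : Type*} [Countable ι] (s : Setoid ι) :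
    ∃ t : ι → ℝ, (∀ i, 0 < t i) ∧ ∀ i j, t i = t j ↔ s i j := by
  obtain ⟨f, hf⟩ := exists_injective_nat (Quotient s)
  refine ⟨fun i => f ⟦i⟧ + 1, fun i => by positivity, fun i j => ?_⟩
  simp [hf.eq_iff, Quotient.eq]

theorem exists_perm_of_isMatching {ι : Type*} [Finite ι] {E M : Finset (ι × ι)}
    (hM : IsMatching E M) (hcov : ∀ v, ∃ e ∈ M, e.2 = v) : ∃ τ : Perm ι, ∀ j, (j, τ j) ∈ E := by
  choose e he hev using hcov
  have hinj : Injective fun i => (e i).1 := fun i j hij => by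
    rw [← hev i, ← hev j, hM.2.1 _ (he i) _ (he j) hij]
  set g := Equiv.ofBijective _ (Finite.injective_iff_bijective.1 hinj)
  refine ⟨g.symm, fun j => hM.1 ?_⟩
  have hj : (j, g.symm j) = e (g.symm j) := Prod.ext (g.apply_symm_apply j).symm (hev _).symm
  exact hj ▸ he _

section

variable {ι β : Type*}

/-- `β` indexes bridge edges `src b → tgt b`, one into each cycle of `τ` other than that of
`root`. -/
structure BridgedCycleCover (τ : Perm ι) (root : ι) (β : Type*) where
  weight : ι → ℝ
  weight_pos : ∀ i, 0 < weight i
  weight_eq_weight_iff : ∀ i j, weight i = weight j ↔ τ.SameCycle i j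
  rank : ι → ℕ
  rank_eq_of_sameCycle : ∀ {i j}, τ.SameCycle i j → rank i = rank j
  src : β → ι
  tgt : β → ι
  rank_src_lt : ∀ b, rank (src b) < rank (tgt b)
  not_sameCycle_root_tgt : ∀ b, ¬ τ.SameCycle root (tgt b)
  eq_of_sameCycle_tgt : ∀ {b b'}, τ.SameCycle (tgt b) (tgt b') → b = b'
  exists_sameCycle_tgt : ∀ i, ¬ τ.SameCycle root i → ∃ b, τ.SameCycle i (tgt b)

namespace BridgedCycleCover

variable {τ : Perm ι} {root : ι} (S : BridgedCycleCover τ root β)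

open Classical in
noncomputable def parent (i : ι) : ι :=
  if h : τ.SameCycle root i then i else S.src (S.exists_sameCycle_tgt i h).choose

theorem parent_of_sameCycle_root {i : ι} (h : τ.SameCycle root i) : S.parent i = i :=
  dif_pos h

theorem parent_eq_src {i : ι} {b : β} (hb : τ.SameCycle i (S.tgt b)) : S.parent i = S.src b := by
  have hi : ¬ τ.SameCycle root i := fun h => S.not_sameCycle_root_tgt b (h.trans hb)
  rw [parent, dif_neg hi,
    S.eq_of_sameCycle_tgt (hb.symm.trans (S.exists_sameCycle_tgt i hi).choose_spec).symm]

theorem rank_parent_lt {i : ι} (hi : ¬ τ.SameCycle root i) : S.rank (S.parent i) < S.rank i := by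
  obtain ⟨b, hb⟩ := S.exists_sameCycle_tgt i hi
  rw [S.parent_eq_src hb, S.rank_eq_of_sameCycle hb]
  exact S.rank_src_lt b

theorem rank_parent_le (i : ι) : S.rank (S.parent i) ≤ S.rank i := by
  by_cases hi : τ.SameCycle root i
  · rw [S.parent_of_sameCycle_root hi]
  · exact (S.rank_parent_lt hi).le

theorem rank_parent_iterate_antitone (x : ι) : Antitone fun k => S.rank (S.parent^[k] x) :=
  antitone_nat_of_succ_le fun k => by
    simpa only [iterate_succ_apply'] using S.rank_parent_le _

theorem exists_sameCycle_root_parent_iterate (x : ι) :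
    ∃ k, τ.SameCycle root (S.parent^[k] x) := by
  induction hx : S.rank x using Nat.strong_induction_on generalizing x with
  | _ n ih =>
    by_cases h : τ.SameCycle root x
    · exact ⟨0, h⟩
    · obtain ⟨k, hk⟩ := ih _ (hx ▸ S.rank_parent_lt h) (S.parent x) rfl
      exact ⟨k + 1, by rwa [iterate_succ_apply]⟩

theorem eq_of_sameCycle_parent_iterate_succ {x : ι} {m k : ℕ}
    (hm : ¬ τ.SameCycle root (S.parent^[m] x)) (hk : ¬ τ.SameCycle root (S.parent^[k] x))
    (h : τ.SameCycle (S.parent^[m + 1] x) (S.parent^[k + 1] x)) : m = k := by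
  have hrk := S.rank_eq_of_sameCycle h
  have hlt (j : ℕ) (hj : ¬ τ.SameCycle root (S.parent^[j] x)) :
      S.rank (S.parent^[j + 1] x) < S.rank (S.parent^[j] x) := by
    simpa only [iterate_succ_apply'] using S.rank_parent_lt hj
  have hanti := S.rank_parent_iterate_antitone x
  rcases lt_trichotomy m k with hmk | hmk | hmk
  · have : S.rank (S.parent^[k] x) ≤ S.rank (S.parent^[m + 1] x) := hanti (by omega)
    have := hlt k hk
    omega
  · exact hmk
  · have : S.rank (S.parent^[m] x) ≤ S.rank (S.parent^[k + 1] x) := hanti (by omega)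
    have := hlt m hm
    omega

theorem weight_apply (i : ι) : S.weight (τ i) = S.weight i :=
  (S.weight_eq_weight_iff _ _).2 (Perm.sameCycle_apply_left.2 (Perm.SameCycle.refl τ i))

def OnRootPath (x i : ι) : Prop :=
  ∃ k, τ.SameCycle (S.parent^[k] x) i

variable {S} in
theorem OnRootPath.trans {x i j : ι} (hi : S.OnRootPath x i) (hij : τ.SameCycle i j) :
    S.OnRootPath x j :=
  hi.elim fun k hk => ⟨k, hk.trans hij⟩

variable {S} in
theorem OnRootPath.src {x : ι} {b : β} (hb : S.OnRootPath x (S.tgt b)) : S.OnRootPath x (S.src b) :=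
  hb.elim fun k hk => ⟨k + 1, by rw [iterate_succ_apply', S.parent_eq_src hk]⟩

theorem eq_of_onRootPath {x : ι} {b b' : β} (hb : S.OnRootPath x (S.tgt b))
    (hb' : S.OnRootPath x (S.tgt b')) (h : τ.SameCycle (S.src b) (S.src b')) : b = b' := by
  obtain ⟨k, hk⟩ := hb
  obtain ⟨m, hm⟩ := hb'
  have hkm : k = m := by
    refine S.eq_of_sameCycle_parent_iterate_succ
      (fun hr => S.not_sameCycle_root_tgt b (hr.trans hk))
      (fun hr => S.not_sameCycle_root_tgt b' (hr.trans hm)) ?_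
    rw [iterate_succ_apply', iterate_succ_apply', S.parent_eq_src hk, S.parent_eq_src hm]
    exact h
  subst hkm
  exact S.eq_of_sameCycle_tgt (hk.symm.trans hm)

variable [DecidableEq ι] [Fintype β]

def inflow (v : ι → ℂ) (j : ι) : ℂ :=
  ∑ b, if S.src b = j then v (S.tgt b) else 0

noncomputable def toMatrix : Matrix ι ι ℝ :=
  Matrix.of fun i j => (if i = τ j then S.weight j else 0) +
    ∑ b, if S.tgt b = i ∧ S.src b = j then 1 else 0

theorem inflow_eq_zero {v : ι → ℂ} {j : ι} (h : ∀ b, S.src b = j → v (S.tgt b) = 0) :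
    S.inflow v j = 0 :=
  Finset.sum_eq_zero fun b _ => ite_eq_right_iff.2 (h b)

variable {μ : ℂ} {v : ι → ℂ}

theorem pow_mul_eq_pow_mul_pow_apply
    (hv : ∀ j, μ * v j = S.weight j * v (τ j) + S.inflow v j) {i : ι} {m : ℕ}
    (hg : ∀ a < m, S.inflow v ((τ ^ a) i) = 0) : μ ^ m * v i = S.weight i ^ m * v ((τ ^ m) i) := by
  induction m generalizing i with
  | zero => simp
  | succ m ih =>
    have hstep : μ * v i = S.weight i * v (τ i) := by
      have h0 := hg 0 m.succ_pos
      rw [pow_zero, Perm.one_apply] at h0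
      rw [hv i, h0, add_zero]
    have hrest := ih (i := τ i) fun a ha => by
      simpa [pow_succ, Perm.mul_apply] using hg (a + 1) (by omega)
    rw [S.weight_apply] at hrest
    calc μ ^ (m + 1) * v i = S.weight i * (μ ^ m * v (τ i)) := by
          rw [pow_succ, mul_assoc, hstep, mul_left_comm]
      _ = S.weight i ^ (m + 1) * v ((τ ^ (m + 1)) i) := by
          rw [hrest, pow_succ τ, Perm.mul_apply]
          ring

variable [Fintype ι]

theorem apply_eq_zero_of_inflow_eq_zero
    (hv : ∀ j, μ * v j = S.weight j * v (τ j) + S.inflow v j) {j : ι} (hμ : ‖μ‖ ≠ S.weight j)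
    (hg : ∀ i, τ.SameCycle j i → S.inflow v i = 0) : v j = 0 := by
  have hper := S.pow_mul_eq_pow_mul_pow_apply hv (i := j) (m := orderOf τ)
    fun a _ => hg _ (Perm.sameCycle_pow_right.2 (Perm.SameCycle.refl τ j))
  rw [pow_orderOf_eq_one, Perm.one_apply] at hper
  refine (mul_eq_zero.1 (sub_mul (μ ^ orderOf τ) _ (v j) ▸ sub_eq_zero.2 hper)).resolve_left
    fun h => hμ ?_
  have := congrArg norm (sub_eq_zero.1 h)
  rwa [norm_pow, norm_pow, Complex.norm_real, Real.norm_of_nonneg (S.weight_pos j).le,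
    pow_left_inj₀ (norm_nonneg μ) (S.weight_pos j).le (orderOf_pos τ).ne'] at this

theorem exists_pow_mul_eq_pow_mul
    (hv : ∀ j, μ * v j = S.weight j * v (τ j) + S.inflow v j) {i j : ι}
    (hg : ∀ i, τ.SameCycle j i → i ≠ j → S.inflow v i = 0) (hi : τ.SameCycle i j) :
    ∃ m, μ ^ m * v i = S.weight j ^ m * v j := by
  classical
  have hex := hi.exists_nat_pow_eq
  have hpow := S.pow_mul_eq_pow_mul_pow_apply hv (i := i) (m := Nat.find hex) fun a ha =>
    hg _ (hi.symm.trans (Perm.sameCycle_pow_right.2 (Perm.SameCycle.refl τ i)))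
      (Nat.find_min hex ha)
  rw [Nat.find_spec hex, (S.weight_eq_weight_iff _ _).2 hi] at hpow
  exact ⟨_, hpow⟩

theorem apply_ne_zero_of_sameCycle
    (hv : ∀ j, μ * v j = S.weight j * v (τ j) + S.inflow v j) {i j : ι} (hj : v j ≠ 0)
    (hg : ∀ i, τ.SameCycle j i → i ≠ j → S.inflow v i = 0) (hi : τ.SameCycle j i) : v i ≠ 0 := by
  obtain ⟨m, hm⟩ := S.exists_pow_mul_eq_pow_mul hv hg hi.symm
  have hw : (S.weight j : ℂ) ≠ 0 := by exact_mod_cast (S.weight_pos j).ne'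
  exact right_ne_zero_of_mul (hm ▸ mul_ne_zero (pow_ne_zero _ hw) hj)

/-- A zero of `v` at `j` would propagate backwards around the cycle to `τ j`, and the equation
at `j` would then read `0 = S.inflow v j`. -/
theorem apply_ne_zero_of_inflow_ne_zero
    (hv : ∀ j, μ * v j = S.weight j * v (τ j) + S.inflow v j) (hμ : μ ≠ 0) {j : ι}
    (hj : S.inflow v j ≠ 0) (hg : ∀ i, τ.SameCycle j i → i ≠ j → S.inflow v i = 0) : v j ≠ 0 := by
  intro hvj
  obtain ⟨m, hm⟩ := S.exists_pow_mul_eq_pow_mul hv hg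
    (Perm.sameCycle_apply_left.2 (Perm.SameCycle.refl τ j))
  rw [hvj, mul_zero] at hm
  have hτj : v (τ j) = 0 := (mul_eq_zero.1 hm).resolve_left (pow_ne_zero _ hμ)
  have hj' := hv j
  rw [hvj, hτj, mul_zero, mul_zero, zero_add] at hj'
  exact hj hj'.symm

theorem apply_eq_zero_of_not_onRootPath
    (hv : ∀ j, μ * v j = S.weight j * v (τ j) + S.inflow v j) {x : ι} (hμ : ‖μ‖ = S.weight x)
    {i : ι} (hi : ¬ S.OnRootPath x i) : v i = 0 := by
  induction hd : Finset.univ.sup S.rank - S.rank i using Nat.strong_induction_on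
    generalizing i with
  | _ d ih =>
    have hμi : ‖μ‖ ≠ S.weight i := fun h =>
      hi ⟨0, (S.weight_eq_weight_iff x i).1 (hμ.symm.trans h)⟩
    refine S.apply_eq_zero_of_inflow_eq_zero hv hμi fun j hij => S.inflow_eq_zero fun b hb => ?_
    have hlt : S.rank i < S.rank (S.tgt b) :=
      S.rank_eq_of_sameCycle hij ▸ hb ▸ S.rank_src_lt b
    have hle := Finset.le_sup (f := S.rank) (Finset.mem_univ (S.tgt b))
    refine ih _ (by omega) (fun h => hi ?_) rfl
    exact (hb ▸ h.src).trans hij.symm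

theorem apply_ne_zero_of_onRootPath
    (hv : ∀ j, μ * v j = S.weight j * v (τ j) + S.inflow v j) (hμ0 : μ ≠ 0) {x : ι}
    (hμ : ‖μ‖ = S.weight x) (hx : ∀ i, τ.SameCycle x i → v i ≠ 0) {i : ι} (hi : S.OnRootPath x i) :
    v i ≠ 0 := by
  obtain ⟨k, hk⟩ := hi
  induction k generalizing i with
  | zero => exact hx i hk
  | succ k ih =>
    rw [iterate_succ_apply'] at hk
    by_cases hroot : τ.SameCycle root (S.parent^[k] x)
    · exact ih (S.parent_of_sameCycle_root hroot ▸ hk)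
    obtain ⟨b, hb⟩ := S.exists_sameCycle_tgt _ hroot
    rw [S.parent_eq_src hb] at hk
    have hbpath : S.OnRootPath x (S.tgt b) := ⟨k, hb⟩
    have hdead {b' : β} (hsrc : τ.SameCycle (S.src b) (S.src b')) (hne : b' ≠ b) :
        v (S.tgt b') = 0 :=
      S.apply_eq_zero_of_not_onRootPath hv hμ fun h => hne (S.eq_of_onRootPath hbpath h hsrc).symm
    have hinflow : S.inflow v (S.src b) = v (S.tgt b) := by
      refine (Finset.sum_eq_single b (fun b' _ hne => ite_eq_right_iff.2 fun hsrc =>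
        hdead (hsrc ▸ Perm.SameCycle.refl τ _) hne) (by simp)).trans (if_pos rfl)
    refine S.apply_ne_zero_of_sameCycle hv ?_ ?_ hk
    · refine S.apply_ne_zero_of_inflow_ne_zero hv hμ0 (hinflow ▸ ih hb) fun j hj hne =>
        S.inflow_eq_zero fun b' hb' => hdead (hb' ▸ hj) fun h => hne (h ▸ hb').symm
    · exact fun j hj hne =>
        S.inflow_eq_zero fun b' hb' => hdead (hb' ▸ hj) fun h => hne (h ▸ hb').symm

theorem apply_root_ne_zero (hv : ∀ j, μ * v j = S.weight j * v (τ j) + S.inflow v j)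
    (hv0 : v ≠ 0) : v root ≠ 0 := by
  classical
  obtain ⟨i, hi, hmax⟩ := Finset.exists_max_image (Finset.univ.filter (v · ≠ 0)) S.rank
    (by simpa [Finset.filter_nonempty_iff, funext_iff] using hv0)
  have hvi : v i ≠ 0 := (Finset.mem_filter.1 hi).2
  have hg (j : ι) (hj : τ.SameCycle i j) : S.inflow v j = 0 := S.inflow_eq_zero fun b hb => by
    by_contra h
    have := hmax _ (Finset.mem_filter.2 ⟨Finset.mem_univ _, h⟩)
    have := S.rank_src_lt b
    have := S.rank_eq_of_sameCycle (hb ▸ hj)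
    omega
  have hμ : ‖μ‖ = S.weight i := by
    by_contra h
    exact hvi (S.apply_eq_zero_of_inflow_eq_zero hv h hg)
  have hμ0 : μ ≠ 0 := norm_ne_zero_iff.1 (hμ ▸ (S.weight_pos i).ne')
  obtain ⟨k, hk⟩ := S.exists_sameCycle_root_parent_iterate i
  exact S.apply_ne_zero_of_onRootPath hv hμ0 hμ
    (fun j hj => S.apply_ne_zero_of_sameCycle hv hvi (fun j hj _ => hg j hj) hj) ⟨k, hk.symm⟩

theorem vecMul_map_toMatrix (v : ι → ℂ) :
    v ᵥ* S.toMatrix.map (↑) = fun j => S.weight j * v (τ j) + S.inflow v j := by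
  funext j
  simp only [vecMul, dotProduct, toMatrix, inflow, map_apply, of_apply, Complex.ofReal_add,
    Complex.ofReal_sum, mul_add, Finset.sum_add_distrib, Finset.mul_sum]
  congr 1
  · simp [apply_ite Complex.ofReal, mul_comm]
  · rw [Finset.sum_comm]
    refine Finset.sum_congr rfl fun b _ => ?_
    by_cases h : S.src b = j <;> simp [h, apply_ite Complex.ofReal]

end BridgedCycleCover

end

namespace BridgedCycleCover

theorem realizes_toMatrix {n : ℕ} {τ : Perm (Fin n)} {root : Fin n} {β : Type*} [Fintype β]
    (S : BridgedCycleCover τ root β) {Ab : Matrix (Fin n) (Fin n) Bool}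
    (hτ : ∀ j, Ab (τ j) j = true) (hb : ∀ b, Ab (S.tgt b) (S.src b) = true) :
    Realizes S.toMatrix Ab := by
  intro i j hij
  have hτij : i ≠ τ j := by rintro rfl; simp [hτ j] at hij
  have hbij (b : β) : ¬ (S.tgt b = i ∧ S.src b = j) := by rintro ⟨rfl, rfl⟩; simp [hb b] at hij
  simp [toMatrix, hτij, hbij]

theorem structurallyControllable {n : ℕ} {τ : Perm (Fin n)} {root : Fin n} {β : Type*} [Fintype β]
    (S : BridgedCycleCover τ root β) {Ab : Matrix (Fin n) (Fin n) Bool}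
    (hτ : ∀ j, Ab (τ j) j = true) (hb : ∀ b, Ab (S.tgt b) (S.src b) = true) :
    StructurallyControllable Ab (Matrix.of fun i (_ : Fin 1) => decide (i = root)) := by
  refine ⟨S.toMatrix, Matrix.of fun i _ => if i = root then 1 else 0, S.realizes_toMatrix hτ hb,
    fun i j h => by simpa using h, rank_ctrbMatrix_eq fun μ v hv hv0 h => ?_⟩
  refine S.apply_root_ne_zero (μ := μ) (fun j => ?_) hv0 ?_
  · simpa [S.vecMul_map_toMatrix] using (congrFun hv j).symm
  · simpa [vecMul, dotProduct, apply_ite Complex.ofReal] using congrFun h 0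

end BridgedCycleCover

universe u

theorem exists_bridgedCycleCover {ι : Type u} [Finite ι] (τ : Perm ι) {E : ι → ι → Prop} {r : ι}
    (hr : ∀ v, Relation.ReflTransGen E r v) :
    ∃ (β : Type u) (_ : Fintype β) (S : BridgedCycleCover τ r β), ∀ b, E (S.src b) (S.tgt b) := by
  classical
  have := Fintype.ofFinite ι
  set s := Perm.SameCycle.setoid τ
  obtain ⟨rk, hrk, hbridge⟩ := exists_rank_of_forall_reflTransGen E s hr
  obtain ⟨t, htpos, ht⟩ := exists_pos_eq_iff_setoid s
  have hout (q : {q : Quotient s // q ≠ Quotient.mk s r}) : ¬ s r q.1.out := fun h =>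
    q.2 (Quotient.out_eq q.1 ▸ (Quotient.sound h).symm)
  choose u w hw hE hlt using fun q => hbridge _ (hout q)
  refine ⟨{q : Quotient s // q ≠ Quotient.mk s r}, inferInstance,
    { weight := t
      weight_pos := htpos
      weight_eq_weight_iff := ht
      rank := rk
      rank_eq_of_sameCycle := fun h => hrk _ _ h
      src := u
      tgt := w
      rank_src_lt := fun q => hrk _ _ (hw q) ▸ hlt q
      not_sameCycle_root_tgt := fun q h => hout q (s.trans h (s.symm (hw q)))
      eq_of_sameCycle_tgt := fun {q q'} h => Subtype.ext (Quotient.out_equiv_out.1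
        (s.trans (hw q) (s.trans h (s.symm (hw q')))))
      exists_sameCycle_tgt := fun i hi =>
        have hi' : Quotient.mk s i ≠ Quotient.mk s r := fun h => hi (s.symm (Quotient.exact h))
        ⟨⟨_, hi'⟩, s.trans (s.symm (Quotient.mk_out (s := s) i)) (hw ⟨_, hi'⟩)⟩ }, hE⟩

theorem not_structurallyControllable_of_card_eq_zero {n : ℕ} (hn : 0 < n)
    (Ab : Matrix (Fin n) (Fin n) Bool) (Bb : Matrix (Fin n) (Fin 0) Bool) :
    ¬ StructurallyControllable Ab Bb := by
  rintro ⟨A, B, -, -, hrank⟩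
  have := hrank ▸ (ctrbMatrix A B).rank_le_card_width
  simp only [Fintype.card_prod, Fintype.card_fin, mul_zero] at this
  omega

theorem minDedicatedInputs_eq_one {n : ℕ} (hn : 0 < n) {Ab : Matrix (Fin n) (Fin n) Bool}
    {Bb : Matrix (Fin n) (Fin 1) Bool} (hBb : Dedicated Bb) (h : StructurallyControllable Ab Bb) :
    minDedicatedInputs Ab = 1 := by
  refine le_antisymm (Nat.sInf_le ⟨Bb, hBb, h⟩) (Nat.one_le_iff_ne_zero.2 fun h0 => ?_)
  rcases Nat.sInf_eq_zero.1 h0 with ⟨Bb', -, h'⟩ | hempty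
  · exact not_structurallyControllable_of_card_eq_zero hn Ab Bb' h'
  · exact hempty.subset ⟨Bb, hBb, h⟩

/-- If `D(Ā)` is strongly connected and `B(X, X, E)` admits a perfect
matching, then the minimum number of dedicated inputs equals `1`. -/
theorem minDedicatedInputs_eq_one_of_stronglyConnected_perfectMatching
    {n : ℕ} (hn : 0 < n) (Ab : Matrix (Fin n) (Fin n) Bool)
    (hsc : ∀ v w : Fin n, Reach (stateEdge Ab) v w)
    (hpm : ∃ M : Finset (Fin n × Fin n),
      IsMatching (stateEdgeFinset Ab) M ∧ ∀ v : Fin n, ∃ e ∈ M, e.2 = v) :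
    minDedicatedInputs Ab = 1 := by
  obtain ⟨M, hM, hcov⟩ := hpm
  obtain ⟨τ, hτ⟩ := exists_perm_of_isMatching hM hcov
  obtain ⟨β, _, S, hS⟩ := exists_bridgedCycleCover τ (hsc ⟨0, hn⟩)
  refine minDedicatedInputs_eq_one hn (fun _ => ⟨⟨0, hn⟩, by simp, fun i hi => by simpa using hi⟩)
    (S.structurallyControllable (fun j => (Finset.mem_filter.1 (hτ j)).2) hS)
end

section
/- Let Ā ∈ {0,*}^{n×n} with state digraph D(Ā) = (X, E), and let m = n − |M*| be the number of right-unmatched vertices of a maximum matching M* of B(X, X, E). If B̄ ∈ {0,*}^{n×p} is a dedicated input pattern such that (Ā, B̄) is structurally controllable, then p ≥ m. -/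
/-! The columns of `[B, AB, …, A^{n-1}B]` lie in `range A + range B`, so full rank forces
`n ≤ rank A + p`. A nonsingular `r × r` submatrix of `A`, `r = rank A`, has a nonzero term
`∏ᵢ A_{σ(i) i}` in its Leibniz expansion, and these nonzero entries form a matching of size
`rank A` in `B(X, X, E)`; hence `n ≤ |M*| + p`. -/

namespace Matrix

variable {m n K : Type*} [Fintype m] [Fintype n] [Field K]

theorem exists_linearIndependent_cols_of_rank_eq {r : ℕ} (A : Matrix m n K) (hr : A.rank = r) :
    ∃ g : Fin r → n, LinearIndependent K fun i => A.col (g i) := by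
  subst hr
  rw [rank_eq_finrank_span_cols]
  obtain ⟨v, hv, -, hli⟩ := Submodule.exists_fun_fin_finrank_span_eq K (Set.range A.col)
  choose g hg using hv
  exact ⟨g, by simpa only [hg] using hli⟩

theorem exists_isUnit_submatrix (A : Matrix m n K) :
    ∃ (f : Fin A.rank → m) (g : Fin A.rank → n),
      Function.Injective f ∧ Function.Injective g ∧ IsUnit (A.submatrix f g) := by
  obtain ⟨g, hg⟩ := A.exists_linearIndependent_cols_of_rank_eq rfl
  have hrank : (A.submatrix id g)ᵀ.rank = A.rank := by
    rw [rank_transpose, rank_eq_finrank_span_cols]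
    exact (finrank_span_eq_card hg).trans (Fintype.card_fin _)
  obtain ⟨f, hf⟩ := (A.submatrix id g)ᵀ.exists_linearIndependent_cols_of_rank_eq hrank
  exact ⟨f, g, hf.injective.of_comp, hg.injective.of_comp,
    linearIndependent_rows_iff_isUnit.1 hf⟩

theorem exists_perm_forall_ne_zero_of_det_ne_zero {ι R : Type*} [Fintype ι] [DecidableEq ι]
    [CommRing R] {A : Matrix ι ι R} (h : A.det ≠ 0) :
    ∃ σ : Equiv.Perm ι, ∀ i, A (σ i) i ≠ 0 := by
  contrapose! h
  rw [det_apply]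
  refine Finset.sum_eq_zero fun σ _ => ?_
  obtain ⟨i, hi⟩ := h σ
  rw [Finset.prod_eq_zero (f := fun j => A (σ j) j) (Finset.mem_univ i) hi, smul_zero]

end Matrix

theorem exists_isMatching_card_eq {ι α β : Type*} [Fintype ι]
    {E : Finset (α × β)} {f : ι → α} {g : ι → β} (hf : Function.Injective f)
    (hg : Function.Injective g) (hE : ∀ i, (f i, g i) ∈ E) :
    ∃ M, IsMatching E M ∧ M.card = Fintype.card ι := by
  classical
  refine ⟨Finset.univ.image fun i => (f i, g i), ⟨?_, ?_, ?_⟩, ?_⟩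
  · simpa [Finset.subset_iff] using hE
  · simp only [Finset.mem_image, Finset.mem_univ, true_and]
    rintro _ ⟨i, rfl⟩ _ ⟨j, rfl⟩ hij
    rw [hf hij]
  · simp only [Finset.mem_image, Finset.mem_univ, true_and]
    rintro _ ⟨i, rfl⟩ _ ⟨j, rfl⟩ hij
    rw [hg hij]
  · exact Finset.card_image_of_injective _ fun i j hij => hf (congrArg Prod.fst hij)

theorem exists_isMatching_stateEdgeFinset_card_eq_rank {n : ℕ} {Ab : Matrix (Fin n) (Fin n) Bool}
    {A : Matrix (Fin n) (Fin n) ℝ} (hA : Realizes A Ab) :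
    ∃ M, IsMatching (stateEdgeFinset Ab) M ∧ M.card = A.rank := by
  obtain ⟨f, g, hf, hg, hunit⟩ := A.exists_isUnit_submatrix
  obtain ⟨σ, hσ⟩ := Matrix.exists_perm_forall_ne_zero_of_det_ne_zero
    ((Matrix.isUnit_iff_isUnit_det _).1 hunit).ne_zero
  simpa using exists_isMatching_card_eq (E := stateEdgeFinset Ab) hg (hf.comp σ.injective)
    fun i => by
      simpa [stateEdgeFinset] using mt (hA (f (σ i)) (g i)) (hσ i)

theorem rank_ctrbMatrix_le {n p : ℕ} (A : Matrix (Fin n) (Fin n) ℝ) (B : Matrix (Fin n) (Fin p) ℝ) :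
    (ctrbMatrix A B).rank ≤ A.rank + p := by
  have hcol : ∀ q, (ctrbMatrix A B).col q ∈
      LinearMap.range A.mulVecLin ⊔ LinearMap.range B.mulVecLin := by
    rintro ⟨⟨_ | k, hk⟩, j⟩
    · refine Submodule.mem_sup_right ⟨Pi.single j 1, ?_⟩
      ext i
      simp [ctrbMatrix]
    · refine Submodule.mem_sup_left ⟨(A ^ k * B).col j, ?_⟩
      ext i
      simp only [ctrbMatrix, Matrix.col_apply, Matrix.of_apply, Matrix.mulVecLin_apply]
      rw [pow_succ', Matrix.mul_assoc]
      rfl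
  calc (ctrbMatrix A B).rank
      ≤ Module.finrank ℝ ↥(LinearMap.range A.mulVecLin ⊔ LinearMap.range B.mulVecLin) := by
        refine Submodule.finrank_mono ?_
        rw [Matrix.range_mulVecLin, Submodule.span_le]
        rintro _ ⟨q, rfl⟩
        exact hcol q
    _ ≤ A.rank + B.rank := Submodule.finrank_add_le_finrank_add_finrank _ _
    _ ≤ A.rank + p := by grw [B.rank_le_width]

theorem num_dedicated_inputs_ge_num_right_unmatched_general
    {n p : ℕ} (Ab : Matrix (Fin n) (Fin n) Bool)
    (M : Finset (Fin n × Fin n)) (hM : IsMaxMatching (stateEdgeFinset Ab) M)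
    (Bb : Matrix (Fin n) (Fin p) Bool)
    (hctrb : StructurallyControllable Ab Bb) :
    n - M.card ≤ p := by
  obtain ⟨A, B, hA, -, hrank⟩ := hctrb
  obtain ⟨M', hM', hcard⟩ := exists_isMatching_stateEdgeFinset_card_eq_rank hA
  have hM'_le : M'.card ≤ M.card := hM.2 M' hM'
  have hrank_le := rank_ctrbMatrix_le A B
  omega

/-- Any dedicated input pattern `B̄ ∈ {0,*}^{n×p}` rendering `(Ā, B̄)`
structurally controllable satisfies `p ≥ m`, where `m = n − |M*|` is the number of
right-unmatched vertices of a maximum matching `M*` of `B(X, X, E)`. -/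
theorem num_dedicated_inputs_ge_num_right_unmatched
    {n p : ℕ} (Ab : Matrix (Fin n) (Fin n) Bool)
    (M : Finset (Fin n × Fin n)) (hM : IsMaxMatching (stateEdgeFinset Ab) M)
    (Bb : Matrix (Fin n) (Fin p) Bool) (hded : Dedicated Bb)
    (hctrb : StructurallyControllable Ab Bb) :
    n - M.card ≤ p :=
  num_dedicated_inputs_ge_num_right_unmatched_general Ab M hM Bb hctrb
end

section
/- Let Ā ∈ {0,*}^{n×n} with state digraph D(Ā), and let B̄ ∈ {0,*}^{n×p} be a dedicated input pattern such that (Ā, B̄) is structurally controllable. Then every non-top-linked strongly connected component of D(Ā) contains at least one state vertex x_i for which some column of B̄ has its nonzero entry in row i; consequently p is at least the number β of non-top-linked strongly connected components of D(Ā). -/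
open Classical in
lemma aux_pow_block {n : ℕ} (A : Matrix (Fin n) (Fin n) ℝ) (S : Set (Fin n))
    (hA : ∀ i ∈ S, ∀ j, j ∉ S → A i j = 0) :
    ∀ k : ℕ, ∀ i ∈ S, ∀ j, j ∉ S → (A ^ k) i j = 0 := by
  intro k
  induction k with
  | zero =>
      intro i hi j hj
      have hne : i ≠ j := fun h => hj (h ▸ hi)
      simp [Matrix.one_apply_ne hne]
  | succ k ih =>
      intro i hi j hj
      rw [pow_succ', Matrix.mul_apply]
      apply Finset.sum_eq_zero
      intro m _
      by_cases hm : m ∈ S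
      · rw [ih m hm j hj, mul_zero]
      · rw [hA i hi m hm, zero_mul]

lemma aux_rank_lt_of_zero_row {n : ℕ} {ι : Type*} [Fintype ι]
    (C : Matrix (Fin n) ι ℝ) (i : Fin n) (h : ∀ j, C i j = 0) : C.rank < n := by
  have hle : LinearMap.range C.mulVecLin ≤ LinearMap.ker (LinearMap.proj (R := ℝ)
      (φ := fun _ : Fin n => ℝ) i) := by
    rintro v ⟨x, rfl⟩
    simp only [LinearMap.mem_ker, LinearMap.proj_apply, Matrix.mulVecLin_apply,
      Matrix.mulVec, dotProduct]
    apply Finset.sum_eq_zero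
    intro j _
    simp [h j]
  have hker : Module.finrank ℝ (LinearMap.ker (LinearMap.proj (R := ℝ)
      (φ := fun _ : Fin n => ℝ) i)) = n - 1 := by
    have hsum := LinearMap.finrank_range_add_finrank_ker
      (LinearMap.proj (R := ℝ) (φ := fun _ : Fin n => ℝ) i)
    have hsurj : Function.Surjective (LinearMap.proj (R := ℝ)
        (φ := fun _ : Fin n => ℝ) i) := fun c => ⟨fun _ => c, rfl⟩
    have hrange : LinearMap.range (LinearMap.proj (R := ℝ)
        (φ := fun _ : Fin n => ℝ) i) = ⊤ := LinearMap.range_eq_top.mpr hsurj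
    rw [hrange] at hsum
    simp only [finrank_top, Module.finrank_self, Module.finrank_pi, Fintype.card_fin] at hsum
    omega
  have hrank : C.rank ≤ n - 1 := by
    rw [Matrix.rank]
    calc Module.finrank ℝ (LinearMap.range C.mulVecLin)
        ≤ Module.finrank ℝ (LinearMap.ker (LinearMap.proj (R := ℝ)
          (φ := fun _ : Fin n => ℝ) i)) := Submodule.finrank_mono hle
      _ = n - 1 := hker
  have hn : 0 < n := i.pos
  omega

lemma aux_scc_eq {V : Type*} {edge : V → V → Prop} {S T : Set V}
    (hS : IsSCC edge S) (hT : IsSCC edge T) {v : V} (hvS : v ∈ S) (hvT : v ∈ T) :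
    S = T := by
  ext w
  constructor
  · intro hw
    exact hT.2.2 v hvT w (hS.2.1 v hvS w hw) (hS.2.1 w hw v hvS)
  · intro hw
    exact hS.2.2 v hvS w (hT.2.1 v hvT w hw) (hT.2.1 w hw v hvT)

/-- If a dedicated input pattern `B̄` renders `(Ā, B̄)` structurally
controllable, then every non-top-linked SCC of `D(Ā)` contains a state receiving a
dedicated input (a row in which some column of `B̄` has its nonzero entry); hence
`p ≥ β`, the number of non-top-linked SCCs. -/
theorem nonTopLinkedSCC_receive_dedicated_inputs
    {n p : ℕ} (Ab : Matrix (Fin n) (Fin n) Bool)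
    (Bb : Matrix (Fin n) (Fin p) Bool) (hded : Dedicated Bb)
    (hctrb : StructurallyControllable Ab Bb) :
    (∀ S : Set (Fin n), IsNonTopLinkedSCC (stateEdge Ab) S →
      ∃ i ∈ S, ∃ j, Bb i j = true) ∧
    numNonTopSCC Ab ≤ p := by
  classical
  obtain ⟨A, B, hA, hB, hrank⟩ := hctrb
  have part1 : ∀ S : Set (Fin n), IsNonTopLinkedSCC (stateEdge Ab) S →
      ∃ i ∈ S, ∃ j, Bb i j = true := by
    intro S hS
    by_contra hcon
    push_neg at hcon
    -- B has zero rows on S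
    have hBzero : ∀ i ∈ S, ∀ j, B i j = 0 := by
      intro i hi j
      exact hB i j (by simpa using hcon i hi j)
    -- A has zero block
    have hAblock : ∀ i ∈ S, ∀ j, j ∉ S → A i j = 0 := by
      intro i hi j hj
      apply hA
      by_contra hab
      have : Ab i j = true := by simpa using hab
      exact hj (hS.2 j i this hi)
    obtain ⟨i₀, hi₀⟩ := hS.1.1
    have hrow : ∀ jk : Fin n × Fin p, ctrbMatrix A B i₀ jk = 0 := by
      intro jk
      show (A ^ (jk.1 : ℕ) * B) i₀ jk.2 = 0
      rw [Matrix.mul_apply]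
      apply Finset.sum_eq_zero
      intro m _
      by_cases hm : m ∈ S
      · rw [hBzero m hm jk.2, mul_zero]
      · rw [aux_pow_block A S hAblock _ i₀ hi₀ m hm, zero_mul]
    have := aux_rank_lt_of_zero_row (ctrbMatrix A B) i₀ hrow
    omega
  refine ⟨part1, ?_⟩
  set T : Set (Set (Fin n)) := {S | IsNonTopLinkedSCC (stateEdge Ab) S} with hT
  rcases T.eq_empty_or_nonempty with hTe | ⟨S₀, hS₀⟩
  · simp [numNonTopSCC, ← hT, hTe]
  · obtain ⟨i₀, _, j₀, _⟩ := part1 S₀ hS₀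
    have : Nonempty (Fin p) := ⟨j₀⟩
    set f : Set (Fin n) → Fin p := fun S =>
      if h : ∃ j, ∃ i ∈ S, Bb i j = true then h.choose else Classical.arbitrary _ with hf
    have hfspec : ∀ S ∈ T, ∃ i ∈ S, Bb i (f S) = true := by
      intro S hS
      obtain ⟨i, hi, j, hj⟩ := part1 S hS
      have hex : ∃ j, ∃ i ∈ S, Bb i j = true := ⟨j, i, hi, hj⟩
      rw [hf]
      simp only [dif_pos hex]
      exact hex.choose_spec
    have hinj : Set.InjOn f T := by
      intro S hS S' hS' hfeq
      obtain ⟨i, hi, hbi⟩ := hfspec S hS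
      obtain ⟨i', hi', hbi'⟩ := hfspec S' hS'
      rw [hfeq] at hbi
      obtain ⟨k, _, hk⟩ := hded (f S')
      have : i = i' := (hk i hbi).trans (hk i' hbi').symm
      exact aux_scc_eq hS.1 hS'.1 hi (this ▸ hi')
    have := Set.ncard_le_ncard_of_injOn f (fun S _ => Set.mem_univ (f S)) hinj
      (Set.finite_univ (α := Fin p))
    simpa [numNonTopSCC, ← hT, Set.ncard_univ] using this
end
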